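/- arXiv:2102.05861 — 12 statements merged into one kernel-verified Lean document; each statement's English description precedes it below -/
import Mathlib

section
/- For every t > 0 with 2tη − t²κ² ≤ 1 and every x, y ∈ Q, one has ‖(Tx − tF(Tx)) − (Ty − tF(Ty))‖ ≤ (1 − t(η − tκ²/2))‖x − y‖. -/
open scoped RealInnerProductSpace

/-- The mapping `x ↦ Tx - t F(Tx)` is a contraction with constant `1 - t(η - tκ²/2)`. -/
theorem contraction_I_sub_tF_comp_T
    {H : Type*} [NormedAddCommGroup H] [InnerProductSpace ℝ H] [CompleteSpace H]
    (Q : Set H) (hQne : Q.Nonempty) (hQclosed : IsClosed Q) (hQconvex : Convex ℝ Q)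
    (T F : H → H)
    (hTmaps : ∀ x ∈ Q, T x ∈ Q)
    (hTnonexp : ∀ x ∈ Q, ∀ y ∈ Q, ‖T x - T y‖ ≤ ‖x - y‖)
    (κ η : ℝ) (hκ : 0 < κ) (hη : 0 < η)
    (hFLip : ∀ x ∈ Q, ∀ y ∈ Q, ‖F x - F y‖ ≤ κ * ‖x - y‖)
    (hFmono : ∀ x ∈ Q, ∀ y ∈ Q, η * ‖x - y‖ ^ 2 ≤ ⟪F x - F y, x - y⟫)
    (t : ℝ) (ht : 0 < t) (ht1 : 2 * t * η - t ^ 2 * κ ^ 2 ≤ 1)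
    (x y : H) (hx : x ∈ Q) (hy : y ∈ Q) :
    ‖(T x - t • F (T x)) - (T y - t • F (T y))‖
      ≤ (1 - t * (η - t * κ ^ 2 / 2)) * ‖x - y‖ := by
  set u := T x with hu
  set v := T y with hv
  have huQ : u ∈ Q := hTmaps x hx
  have hvQ : v ∈ Q := hTmaps y hy
  set a := ‖u - v‖ with ha
  have ha0 : 0 ≤ a := norm_nonneg _
  have hmono := hFmono u huQ v hvQ
  have hlip := hFLip u huQ v hvQ
  -- rewrite the vector
  have hvec : (u - t • F u) - (v - t • F v) = (u - v) - t • (F u - F v) := by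
    rw [smul_sub]; abel
  set c : ℝ := 1 - t * (η - t * κ ^ 2 / 2) with hc
  have hc0 : 0 ≤ c := by
    have : t * (η - t * κ ^ 2 / 2) = (2 * t * η - t ^ 2 * κ ^ 2) / 2 := by ring
    rw [hc, this]; linarith
  -- squared norm bound
  have hsq : ‖(u - v) - t • (F u - F v)‖ ^ 2 ≤ (1 - 2 * t * η + t ^ 2 * κ ^ 2) * a ^ 2 := by
    have hexp : ‖(u - v) - t • (F u - F v)‖ ^ 2
        = a ^ 2 - 2 * t * ⟪F u - F v, u - v⟫ + t ^ 2 * ‖F u - F v‖ ^ 2 := by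
      rw [norm_sub_sq_real, norm_smul, real_inner_smul_right, real_inner_comm]
      simp [abs_of_pos ht]
      ring
    rw [hexp]
    have h1 : 2 * t * (η * a ^ 2) ≤ 2 * t * ⟪F u - F v, u - v⟫ := by
      apply mul_le_mul_of_nonneg_left hmono (by positivity)
    have h2 : ‖F u - F v‖ ^ 2 ≤ (κ * a) ^ 2 := by
      apply sq_le_sq' _ hlip
      nlinarith [norm_nonneg (F u - F v)]
    have h3 : t ^ 2 * ‖F u - F v‖ ^ 2 ≤ t ^ 2 * (κ * a) ^ 2 :=
      mul_le_mul_of_nonneg_left h2 (by positivity)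
    nlinarith
  have hcsq : (1 - 2 * t * η + t ^ 2 * κ ^ 2) * a ^ 2 ≤ (c * a) ^ 2 := by
    have : c ^ 2 = 1 - 2 * t * η + t ^ 2 * κ ^ 2 + (t * η - t ^ 2 * κ ^ 2 / 2) ^ 2 := by
      rw [hc]; ring
    have h : 1 - 2 * t * η + t ^ 2 * κ ^ 2 ≤ c ^ 2 := by
      rw [hc]; nlinarith [sq_nonneg (t * η - t ^ 2 * κ ^ 2 / 2)]
    calc (1 - 2 * t * η + t ^ 2 * κ ^ 2) * a ^ 2 ≤ c ^ 2 * a ^ 2 :=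
          mul_le_mul_of_nonneg_right h (sq_nonneg a)
      _ = (c * a) ^ 2 := by ring
  have hnorm : ‖(u - v) - t • (F u - F v)‖ ≤ c * a := by
    have h := hsq.trans hcsq
    have hca : 0 ≤ c * a := mul_nonneg hc0 ha0
    nlinarith [norm_nonneg ((u - v) - t • (F u - F v))]
  rw [hvec]
  calc ‖(u - v) - t • (F u - F v)‖ ≤ c * a := hnorm
    _ ≤ c * ‖x - y‖ := mul_le_mul_of_nonneg_left (hTnonexp x hx y hy) hc0
end

section
/- (Lemma 4.) Let δ₀ ∈ (0, δ₀*) where δ₀* = 2(η − α)/κ², and set σ₀ = η − α − κ²δ₀/2. Then for every t ∈ (0, δ₀], the mapping S_t : Q → H defined by S_t(x) = t f(x) + (Tx − tF(Tx)) is Lipschitz with constant 1 − tσ₀, i.e. ‖S_t(x) − S_t(y)‖ ≤ (1 − tσ₀)‖x − y‖ for all x, y ∈ Q. -/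
open scoped RealInnerProductSpace

set_option maxHeartbeats 1000000 in
/-- Lemma 4: the mapping `S_t(x) = t f(x) + (Tx - t F(Tx))` is Lipschitz with
constant `1 - t σ₀` for `t ∈ (0, δ₀]`, where `σ₀ = η - α - κ²δ₀/2`. -/
theorem St_lipschitz
    {H : Type*} [NormedAddCommGroup H] [InnerProductSpace ℝ H] [CompleteSpace H]
    (Q : Set H) (hQne : Q.Nonempty) (hQclosed : IsClosed Q) (hQconvex : Convex ℝ Q)
    (T f F : H → H)
    (hTmaps : ∀ x ∈ Q, T x ∈ Q)
    (hTnonexp : ∀ x ∈ Q, ∀ y ∈ Q, ‖T x - T y‖ ≤ ‖x - y‖)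
    (αf : ℝ) (hαf : 0 ≤ αf)
    (hfLip : ∀ x ∈ Q, ∀ y ∈ Q, ‖f x - f y‖ ≤ αf * ‖x - y‖)
    (κ η : ℝ) (hκ : 0 < κ) (hη : 0 < η)
    (hFLip : ∀ x ∈ Q, ∀ y ∈ Q, ‖F x - F y‖ ≤ κ * ‖x - y‖)
    (hFmono : ∀ x ∈ Q, ∀ y ∈ Q, η * ‖x - y‖ ^ 2 ≤ ⟪F x - F y, x - y⟫)
    (hαη : αf < η)
    (δ₀ : ℝ) (hδ₀ : δ₀ ∈ Set.Ioo 0 (2 * (η - αf) / κ ^ 2))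
    (σ₀ : ℝ) (hσ₀ : σ₀ = η - αf - κ ^ 2 * δ₀ / 2)
    (t : ℝ) (ht : t ∈ Set.Ioc 0 δ₀)
    (x y : H) (hx : x ∈ Q) (hy : y ∈ Q) :
    ‖(t • f x + (T x - t • F (T x))) - (t • f y + (T y - t • F (T y)))‖
      ≤ (1 - t * σ₀) * ‖x - y‖ := by

  obtain ⟨ht0, htδ⟩ := ht
  rcases eq_or_ne x y with rfl | hxy
  · simp
  have hxyn : 0 < ‖x - y‖ := by
    rw [norm_pos_iff, sub_ne_zero]; exact hxy
  have hηκ : η ≤ κ := by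
    have h1 := hFmono x hx y hy
    have h2 : ⟪F x - F y, x - y⟫ ≤ κ * ‖x - y‖ ^ 2 := by
      calc ⟪F x - F y, x - y⟫ ≤ ‖F x - F y‖ * ‖x - y‖ := real_inner_le_norm _ _
        _ ≤ (κ * ‖x - y‖) * ‖x - y‖ := by
              have := hFLip x hx y hy
              exact mul_le_mul_of_nonneg_right this (norm_nonneg _)
        _ = κ * ‖x - y‖ ^ 2 := by ring
    nlinarith [pow_pos hxyn 2]
  set a := T x - T y with ha_def
  set b := F (T x) - F (T y) with hb_def
  have hTx := hTmaps x hx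
  have hTy := hTmaps y hy
  have ha : ‖a‖ ≤ ‖x - y‖ := hTnonexp x hx y hy
  have hb : ‖b‖ ≤ κ * ‖a‖ := hFLip _ hTx _ hTy
  have hmono : η * ‖a‖ ^ 2 ≤ ⟪b, a⟫ := hFmono _ hTx _ hTy
  have hexp : ‖a - t • b‖ ^ 2 = ‖a‖ ^ 2 - 2 * t * ⟪b, a⟫ + t ^ 2 * ‖b‖ ^ 2 := by
    rw [norm_sub_sq_real, inner_smul_right, norm_smul, real_inner_comm]
    rw [Real.norm_eq_abs, mul_pow, sq_abs]
    ring
  set c := 1 - t * η + t ^ 2 * κ ^ 2 / 2 with hc_def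
  have hκ2 : (0:ℝ) < κ ^ 2 := by positivity
  have hc : 0 < c := by
    rw [hc_def]
    nlinarith [sq_nonneg (t * η - 1),
      mul_le_mul_of_nonneg_left (mul_le_mul hηκ hηκ hη.le hκ.le) (sq_nonneg t)]
  have hb2 : ‖b‖ ^ 2 ≤ κ ^ 2 * ‖a‖ ^ 2 := by
    nlinarith [norm_nonneg b, norm_nonneg a, mul_nonneg hκ.le (norm_nonneg a)]
  have h2 : ‖a - t • b‖ ^ 2 ≤ (c * ‖a‖) ^ 2 := by
    rw [hc_def]
    have e1 : t ^ 2 * ‖b‖ ^ 2 ≤ t ^ 2 * (κ ^ 2 * ‖a‖ ^ 2) :=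
      mul_le_mul_of_nonneg_left hb2 (sq_nonneg t)
    have e2 : (2 * t) * (η * ‖a‖ ^ 2) ≤ (2 * t) * ⟪b, a⟫ :=
      mul_le_mul_of_nonneg_left hmono (by positivity)
    nlinarith [sq_nonneg ((t * η - t ^ 2 * κ ^ 2 / 2) * ‖a‖)]
  have hub : ‖a - t • b‖ ≤ c * ‖a‖ := by
    nlinarith [norm_nonneg (a - t • b), mul_nonneg hc.le (norm_nonneg a)]
  have hrw : (t • f x + (T x - t • F (T x))) - (t • f y + (T y - t • F (T y)))
      = t • (f x - f y) + (a - t • b) := by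
    rw [ha_def, hb_def, smul_sub, smul_sub]; abel
  calc ‖(t • f x + (T x - t • F (T x))) - (t • f y + (T y - t • F (T y)))‖
      = ‖t • (f x - f y) + (a - t • b)‖ := by rw [hrw]
    _ ≤ ‖t • (f x - f y)‖ + ‖a - t • b‖ := norm_add_le _ _
    _ ≤ t * (αf * ‖x - y‖) + c * ‖a‖ := by
        refine add_le_add ?_ hub
        rw [norm_smul, Real.norm_eq_abs, abs_of_pos ht0]
        exact mul_le_mul_of_nonneg_left (hfLip x hx y hy) ht0.le
    _ ≤ t * (αf * ‖x - y‖) + c * ‖x - y‖ :=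
        add_le_add le_rfl (mul_le_mul_of_nonneg_left ha hc.le)
    _ = (t * αf + c) * ‖x - y‖ := by ring
    _ ≤ (1 - t * σ₀) * ‖x - y‖ := by
        refine mul_le_mul_of_nonneg_right ?_ (norm_nonneg _)
        rw [hσ₀, hc_def]
        nlinarith [mul_le_mul_of_nonneg_left htδ (mul_nonneg ht0.le hκ2.le)]
end

section
/- Let δ₀ ∈ (0, δ₀*) where δ₀* = 2(η − α)/κ², set σ₀ = η − α − κ²δ₀/2, and let t ∈ (0, δ₀]. Let e ∈ H, and let x_t, y_t ∈ Q satisfy x_t = P_Q(t f(x_t) + (T x_t − t F(T x_t))) and y_t = P_Q(t f(y_t) + (T y_t − t F(T y_t)) + e). Then ‖x_t − y_t‖ ≤ ‖e‖/(t σ₀). -/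
open scoped RealInnerProductSpace

set_option maxHeartbeats 2000000 in
/-- Comparison between the unperturbed and perturbed implicit iterates:
`‖x_t - y_t‖ ≤ ‖e‖ / (t σ₀)`. -/
theorem implicit_perturbation_bound
    {H : Type*} [NormedAddCommGroup H] [InnerProductSpace ℝ H] [CompleteSpace H]
    (Q : Set H) (hQne : Q.Nonempty) (hQclosed : IsClosed Q) (hQconvex : Convex ℝ Q)
    (T f F : H → H)
    (hTmaps : ∀ x ∈ Q, T x ∈ Q)
    (hTnonexp : ∀ x ∈ Q, ∀ y ∈ Q, ‖T x - T y‖ ≤ ‖x - y‖)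
    (αf : ℝ) (hαf : 0 ≤ αf)
    (hfLip : ∀ x ∈ Q, ∀ y ∈ Q, ‖f x - f y‖ ≤ αf * ‖x - y‖)
    (κ η : ℝ) (hκ : 0 < κ) (hη : 0 < η)
    (hFLip : ∀ x ∈ Q, ∀ y ∈ Q, ‖F x - F y‖ ≤ κ * ‖x - y‖)
    (hFmono : ∀ x ∈ Q, ∀ y ∈ Q, η * ‖x - y‖ ^ 2 ≤ ⟪F x - F y, x - y⟫)
    (hαη : αf < η)
    (PQ : H → H)
    (hPQ : ∀ x : H, PQ x ∈ Q ∧ ∀ y ∈ Q, ⟪x - PQ x, y - PQ x⟫ ≤ 0)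
    (δ₀ : ℝ) (hδ₀ : δ₀ ∈ Set.Ioo 0 (2 * (η - αf) / κ ^ 2))
    (σ₀ : ℝ) (hσ₀ : σ₀ = η - αf - κ ^ 2 * δ₀ / 2)
    (t : ℝ) (ht : t ∈ Set.Ioc 0 δ₀)
    (e : H) (xt yt : H) (hxtQ : xt ∈ Q) (hytQ : yt ∈ Q)
    (hxt : xt = PQ (t • f xt + (T xt - t • F (T xt))))
    (hyt : yt = PQ (t • f yt + (T yt - t • F (T yt)) + e)) :
    ‖xt - yt‖ ≤ ‖e‖ / (t * σ₀) := by
  obtain ⟨ht0, htδ⟩ := ht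
  obtain ⟨hδ0, hδlt⟩ := hδ₀
  have hκ2 : (0:ℝ) < κ ^ 2 := by positivity
  have hκδ : κ ^ 2 * δ₀ < 2 * (η - αf) := by
    have := (lt_div_iff₀ hκ2).mp hδlt
    linarith
  have hσpos : 0 < σ₀ := by rw [hσ₀]; linarith
  have htσ : 0 < t * σ₀ := mul_pos ht0 hσpos
  set a : ℝ := η - κ ^ 2 * δ₀ / 2 with ha_def
  clear_value a
  have haσ : a = σ₀ + αf := by rw [hσ₀, ha_def]; ring
  have ha : 0 < a := by rw [haσ]; linarith
  set d := xt - yt with hd_def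
  clear_value d
  rcases eq_or_lt_of_le (norm_nonneg d) with hD0 | hDpos
  · rw [← hD0]; positivity
  -- ‖d‖ > 0, so xt ≠ yt; deduce η ≤ κ
  have hmonod : η * ‖d‖ ^ 2 ≤ ⟪F xt - F yt, d⟫ := by
    rw [hd_def]; exact hFmono xt hxtQ yt hytQ
  have hFd : ‖F xt - F yt‖ ≤ κ * ‖d‖ := by
    rw [hd_def]; exact hFLip xt hxtQ yt hytQ
  have hηκ : η ≤ κ := by
    have h2 := real_inner_le_norm (F xt - F yt) d
    nlinarith [norm_nonneg d, pow_pos hDpos 2]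
  set A := t • f xt + (T xt - t • F (T xt)) with hA_def
  set B := t • f yt + (T yt - t • F (T yt)) + e with hB_def
  set u := T xt - T yt with hu_def
  set v := F (T xt) - F (T yt) with hv_def
  set G := u - t • v with hG_def
  -- projection variational inequalities
  have h1 : ⟪A - xt, yt - xt⟫ ≤ 0 := by
    rw [hxt]; exact (hPQ A).2 yt hytQ
  have h2 : ⟪B - yt, xt - yt⟫ ≤ 0 := by
    rw [hyt]; exact (hPQ B).2 xt hxtQ
  clear_value A B u v G
  -- key: ‖d‖^2 ≤ ⟪A - B, d⟫
  have hkey : ‖d‖ ^ 2 ≤ ⟪A - B, d⟫ := by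
    have hAB : A - B = (A - xt) + d + (yt - B) := by rw [hd_def]; abel
    have hsplit : ⟪A - B, d⟫ = ⟪A - xt, d⟫ + ⟪d, d⟫ + ⟪yt - B, d⟫ := by
      rw [hAB, inner_add_left, inner_add_left]
    have e1 : ⟪A - xt, d⟫ = -⟪A - xt, yt - xt⟫ := by
      have hyx : yt - xt = -d := by rw [hd_def]; abel
      rw [hyx, inner_neg_right, neg_neg]
    have e2 : ⟪yt - B, d⟫ = -⟪B - yt, xt - yt⟫ := by
      have hyB : yt - B = -(B - yt) := by abel
      rw [hyB, inner_neg_left, hd_def]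
    have e3 : ⟪d, d⟫ = ‖d‖ ^ 2 := real_inner_self_eq_norm_sq d
    rw [hsplit, e1, e2, e3]
    linarith
  -- decomposition of A - B
  have hABd : A - B = t • (f xt - f yt) + G - e := by
    rw [hA_def, hB_def, hG_def, hu_def, hv_def, smul_sub, smul_sub]; abel
  have hinner : ⟪A - B, d⟫ = t * ⟪f xt - f yt, d⟫ + ⟪G, d⟫ - ⟪e, d⟫ := by
    rw [hABd, inner_sub_left, inner_add_left, real_inner_smul_left]
  -- bound on ‖G‖
  have hu_le : ‖u‖ ≤ ‖d‖ := by
    rw [hu_def, hd_def]; exact hTnonexp xt hxtQ yt hytQ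
  have hTxQ : T xt ∈ Q := hTmaps xt hxtQ
  have hTyQ : T yt ∈ Q := hTmaps yt hytQ
  have hmono : η * ‖u‖ ^ 2 ≤ ⟪v, u⟫ := by
    rw [hu_def, hv_def]; exact hFmono (T xt) hTxQ (T yt) hTyQ
  have hvlip : ‖v‖ ≤ κ * ‖u‖ := by
    rw [hu_def, hv_def]; exact hFLip (T xt) hTxQ (T yt) hTyQ
  have hGsq : ‖G‖ ^ 2 = ‖u‖ ^ 2 - 2 * t * ⟪u, v⟫ + t ^ 2 * ‖v‖ ^ 2 := by
    rw [hG_def, norm_sub_sq_real, real_inner_smul_right, norm_smul, Real.norm_eq_abs,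
      mul_pow, sq_abs]
    ring
  have huv : ⟪u, v⟫ = ⟪v, u⟫ := real_inner_comm v u
  have hv2 : ‖v‖ ^ 2 ≤ κ ^ 2 * ‖u‖ ^ 2 := by
    nlinarith [norm_nonneg v, norm_nonneg u, mul_pos hκ hκ]
  have hGsq_le : ‖G‖ ^ 2 ≤ (1 - t * a) ^ 2 * ‖u‖ ^ 2 := by
    have h5 : ‖G‖ ^ 2 ≤ (1 - 2 * t * η + t ^ 2 * κ ^ 2) * ‖u‖ ^ 2 := by
      rw [hGsq, huv]
      nlinarith [sq_nonneg t, ht0]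
    have h6 : (1 - 2 * t * η + t ^ 2 * κ ^ 2) ≤ (1 - t * a) ^ 2 := by
      have hexp : (1 - t * a) ^ 2 - (1 - 2 * t * η + t ^ 2 * κ ^ 2)
          = t * κ ^ 2 * (δ₀ - t) + t ^ 2 * a ^ 2 := by rw [ha_def]; ring
      have hnn1 : 0 ≤ t * κ ^ 2 * (δ₀ - t) :=
        mul_nonneg (mul_nonneg ht0.le hκ2.le) (by linarith)
      have hnn2 : 0 ≤ t ^ 2 * a ^ 2 := by positivity
      linarith
    have h7 := mul_le_mul_of_nonneg_right h6 (sq_nonneg ‖u‖)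
    linarith
  -- t * a ≤ 1/2, hence 1 - t*a ≥ 0
  have hta : t * a ≤ 1 / 2 := by
    have hη2 : η ^ 2 ≤ κ ^ 2 := by nlinarith
    have key : 2 * κ ^ 2 * (δ₀ * a) = η ^ 2 - (η - κ ^ 2 * δ₀) ^ 2 := by
      rw [ha_def]; ring
    have hδa : 2 * κ ^ 2 * (δ₀ * a) ≤ κ ^ 2 := by
      nlinarith [sq_nonneg (η - κ ^ 2 * δ₀)]
    have hδa' : δ₀ * a ≤ 1 / 2 := by nlinarith
    have := mul_le_mul_of_nonneg_right htδ ha.le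
    linarith
  have h1ta : 0 ≤ 1 - t * a := by linarith
  have hGle : ‖G‖ ≤ (1 - t * a) * ‖u‖ := by
    nlinarith [norm_nonneg G, mul_nonneg h1ta (norm_nonneg u), hGsq_le]
  -- assemble the chain
  have bf : ⟪f xt - f yt, d⟫ ≤ αf * ‖d‖ * ‖d‖ := by
    have hi := real_inner_le_norm (f xt - f yt) d
    have hl : ‖f xt - f yt‖ ≤ αf * ‖d‖ := by
      rw [hd_def]; exact hfLip xt hxtQ yt hytQ
    nlinarith [norm_nonneg d]
  have bG : ⟪G, d⟫ ≤ (1 - t * a) * ‖d‖ * ‖d‖ := by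
    have hi := real_inner_le_norm G d
    have hGd : ‖G‖ ≤ (1 - t * a) * ‖d‖ :=
      hGle.trans (by nlinarith [mul_le_mul_of_nonneg_left hu_le h1ta])
    nlinarith [norm_nonneg d, norm_nonneg G]
  have bE : -⟪e, d⟫ ≤ ‖e‖ * ‖d‖ := by
    have habs := abs_real_inner_le_norm e d
    have := neg_le_of_abs_le habs
    linarith
  have hchain : ‖d‖ ^ 2 ≤ t * (αf * ‖d‖ * ‖d‖) + (1 - t * a) * ‖d‖ * ‖d‖ + ‖e‖ * ‖d‖ := by
    have hk := hkey
    rw [hinner] at hk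
    nlinarith [mul_le_mul_of_nonneg_left bf ht0.le]
  have hfin : t * σ₀ * ‖d‖ ≤ ‖e‖ := by
    have hmm : t * σ₀ * ‖d‖ * ‖d‖ ≤ ‖e‖ * ‖d‖ := by
      have hsa : t * σ₀ = t * a - t * αf := by rw [haσ]; ring
      nlinarith [hchain]
    exact le_of_mul_le_mul_right (by linarith) hDpos
  rw [le_div_iff₀ htσ]
  nlinarith [hfin]
end

section
/- Let δ₀ ∈ (0, δ₀*) where δ₀* = 2(η − α)/κ², and set σ₀ = η − α − κ²δ₀/2. Let q ∈ Q be a fixed point of T. Then for every t ∈ (0, δ₀], any point y_t ∈ Q satisfying y_t = P_Q(t f(y_t) + (T y_t − t F(T y_t))) obeys the bound ‖y_t − q‖ ≤ ‖f(q) − F(q)‖/σ₀. -/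
open scoped RealInnerProductSpace

set_option maxHeartbeats 1000000 in
/-- A bound on the distance from the implicit iterate `y_t` to any fixed point `q` of `T`:
`‖y_t - q‖ ≤ ‖f(q) - F(q)‖ / σ₀`. -/
theorem implicit_iterate_bounded
    {H : Type*} [NormedAddCommGroup H] [InnerProductSpace ℝ H] [CompleteSpace H]
    (Q : Set H) (hQne : Q.Nonempty) (hQclosed : IsClosed Q) (hQconvex : Convex ℝ Q)
    (T f F : H → H)
    (hTmaps : ∀ x ∈ Q, T x ∈ Q)
    (hTnonexp : ∀ x ∈ Q, ∀ y ∈ Q, ‖T x - T y‖ ≤ ‖x - y‖)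
    (αf : ℝ) (hαf : 0 ≤ αf)
    (hfLip : ∀ x ∈ Q, ∀ y ∈ Q, ‖f x - f y‖ ≤ αf * ‖x - y‖)
    (κ η : ℝ) (hκ : 0 < κ) (hη : 0 < η)
    (hFLip : ∀ x ∈ Q, ∀ y ∈ Q, ‖F x - F y‖ ≤ κ * ‖x - y‖)
    (hFmono : ∀ x ∈ Q, ∀ y ∈ Q, η * ‖x - y‖ ^ 2 ≤ ⟪F x - F y, x - y⟫)
    (hαη : αf < η)
    (PQ : H → H)
    (hPQ : ∀ x : H, PQ x ∈ Q ∧ ∀ y ∈ Q, ⟪x - PQ x, y - PQ x⟫ ≤ 0)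
    (δ₀ : ℝ) (hδ₀ : δ₀ ∈ Set.Ioo 0 (2 * (η - αf) / κ ^ 2))
    (σ₀ : ℝ) (hσ₀ : σ₀ = η - αf - κ ^ 2 * δ₀ / 2)
    (q : H) (hqQ : q ∈ Q) (hq : T q = q)
    (t : ℝ) (ht : t ∈ Set.Ioc 0 δ₀)
    (yt : H) (hytQ : yt ∈ Q)
    (hyt : yt = PQ (t • f yt + (T yt - t • F (T yt)))) :
    ‖yt - q‖ ≤ ‖f q - F q‖ / σ₀ := by
  obtain ⟨ht0, htδ⟩ := ht
  obtain ⟨hδ0, hδub⟩ := hδ₀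
  have hκ2 : 0 < κ ^ 2 := by positivity
  have hδκ : κ ^ 2 * δ₀ < 2 * (η - αf) := by
    have := (lt_div_iff₀ hκ2).mp hδub
    linarith
  have hσ₀pos : 0 < σ₀ := by rw [hσ₀]; linarith
  by_cases hyq : yt = q
  · rw [hyq, sub_self, norm_zero]; positivity
  have hd : 0 < ‖yt - q‖ := by rw [norm_pos_iff, sub_ne_zero]; exact hyq
  have hηκ : η ≤ κ := by
    have h1 := hFmono yt hytQ q hqQ
    have h2 := real_inner_le_norm (F yt - F q) (yt - q)
    have h3 := hFLip yt hytQ q hqQ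
    nlinarith [mul_le_mul_of_nonneg_right h3 hd.le, mul_pos hd hd]
  have hts : t * (η - t * κ ^ 2 / 2) ≤ 1 / 2 := by
    nlinarith [sq_nonneg (t * κ ^ 2 - η), hκ2, sq_nonneg η]
  have hspos : (1:ℝ)/2 ≤ 1 - t * (η - t * κ ^ 2 / 2) := by linarith
  set u := T yt with hu
  have huQ : u ∈ Q := hTmaps yt hytQ
  have hA : ‖(u - t • F u) - (q - t • F q)‖
      ≤ (1 - t * (η - t * κ ^ 2 / 2)) * ‖u - q‖ := by
    have heq : (u - t • F u) - (q - t • F q) = (u - q) - t • (F u - F q) := by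
      module
    have hexp : ‖(u - t • F u) - (q - t • F q)‖ ^ 2
        = ‖u - q‖ ^ 2 - 2 * t * ⟪F u - F q, u - q⟫ + t ^ 2 * ‖F u - F q‖ ^ 2 := by
      rw [heq, norm_sub_sq_real, real_inner_smul_right, norm_smul, Real.norm_eq_abs,
        abs_of_pos ht0, mul_pow, real_inner_comm]
      ring
    have hmono := hFmono u huQ q hqQ
    have hlip := hFLip u huQ q hqQ
    have hlip2 : ‖F u - F q‖ ^ 2 ≤ κ ^ 2 * ‖u - q‖ ^ 2 := by
      nlinarith [norm_nonneg (F u - F q), norm_nonneg (u - q)]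
    have h2 : ‖(u - t • F u) - (q - t • F q)‖ ^ 2
        ≤ ((1 - t * (η - t * κ ^ 2 / 2)) * ‖u - q‖) ^ 2 := by
      rw [hexp]
      nlinarith [mul_le_mul_of_nonneg_left hmono ht0.le,
        mul_le_mul_of_nonneg_left hlip2 (sq_nonneg t),
        sq_nonneg (t * (η - t * κ ^ 2 / 2) * ‖u - q‖)]
    exact le_of_pow_le_pow_left₀ two_ne_zero (by positivity) h2
  set x_t := t • f yt + (u - t • F u) with hx
  have hproj := (hPQ x_t).2 q hqQ
  rw [← hyt] at hproj
  have hkey : ‖yt - q‖ ^ 2 ≤ ⟪x_t - q, yt - q⟫ := by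
    have h1 : ⟪x_t - q, yt - q⟫ = ⟪x_t - yt, yt - q⟫ + ⟪yt - q, yt - q⟫ := by
      rw [← inner_add_left]; congr 1; abel
    have h2 : ⟪x_t - yt, yt - q⟫ = - ⟪x_t - yt, q - yt⟫ := by
      rw [← inner_neg_right]; congr 1; abel
    rw [h1, h2, real_inner_self_eq_norm_sq]
    linarith
  have hdecomp : ⟪x_t - q, yt - q⟫
      = t * ⟪f yt - f q, yt - q⟫ + t * ⟪f q - F q, yt - q⟫
        + ⟪(u - t • F u) - (q - t • F q), yt - q⟫ := by
    have heq : x_t - q = t • (f yt - f q) + t • (f q - F q)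
        + ((u - t • F u) - (q - t • F q)) := by rw [hx]; module
    rw [heq, inner_add_left, inner_add_left, real_inner_smul_left, real_inner_smul_left]
  have b1 : ⟪f yt - f q, yt - q⟫ ≤ αf * ‖yt - q‖ ^ 2 := by
    nlinarith [real_inner_le_norm (f yt - f q) (yt - q), hfLip yt hytQ q hqQ,
      norm_nonneg (yt - q)]
  have b2 : ⟪f q - F q, yt - q⟫ ≤ ‖f q - F q‖ * ‖yt - q‖ := real_inner_le_norm _ _
  have hnonexp : ‖u - q‖ ≤ ‖yt - q‖ := by
    have h := hTnonexp yt hytQ q hqQ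
    rwa [hq, ← hu] at h
  have b3 : ⟪(u - t • F u) - (q - t • F q), yt - q⟫
      ≤ (1 - t * (η - t * κ ^ 2 / 2)) * ‖yt - q‖ ^ 2 := by
    have c := real_inner_le_norm ((u - t • F u) - (q - t • F q)) (yt - q)
    have c2 := mul_le_mul_of_nonneg_right hA (norm_nonneg (yt - q))
    have c3 := mul_le_mul_of_nonneg_right
      (mul_le_mul_of_nonneg_left hnonexp
        (by linarith : (0:ℝ) ≤ 1 - t * (η - t * κ ^ 2 / 2))) (norm_nonneg (yt - q))
    nlinarith [norm_nonneg (yt - q), norm_nonneg (u - q)]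
  have hcomb : t * (((η - t * κ ^ 2 / 2) - αf) * ‖yt - q‖ ^ 2)
      ≤ t * (‖f q - F q‖ * ‖yt - q‖) := by
    nlinarith [mul_le_mul_of_nonneg_left b1 ht0.le,
      mul_le_mul_of_nonneg_left b2 ht0.le, hkey, hdecomp, b3]
  have hcancel : ((η - t * κ ^ 2 / 2) - αf) * ‖yt - q‖ ^ 2
      ≤ ‖f q - F q‖ * ‖yt - q‖ := le_of_mul_le_mul_left hcomb ht0
  have hfinal : ((η - t * κ ^ 2 / 2) - αf) * ‖yt - q‖ ≤ ‖f q - F q‖ := by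
    nlinarith
  have hsσ : σ₀ ≤ (η - t * κ ^ 2 / 2) - αf := by
    rw [hσ₀]; nlinarith
  rw [le_div_iff₀ hσ₀pos]
  nlinarith [hd.le]
end

section
/- (Theorem 1, convergence part.) Let δ₀* = 2(η − α)/κ² and let e : (0, δ₀*) → H satisfy ‖e(t)‖/t → 0 as t → 0⁺. For each t ∈ (0, δ₀*) let x_t be the unique point of Q with x_t = P_Q(t f(x_t) + (T x_t − t F(T x_t)) + e(t)). Then x_t converges strongly (in norm) as t → 0⁺ to q*, the unique point of C = Fix(T) satisfying ⟨F(q*) − f(q*), x − q*⟩ ≥ 0 for all x ∈ C. -/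
open scoped RealInnerProductSpace
open Filter Topology

private lemma sq_le_imp' {a b : ℝ} (ha : 0 ≤ a) (hb : 0 ≤ b) (h : a^2 ≤ b^2) : a ≤ b := by
  nlinarith

private lemma contraction_aux {H : Type*} [NormedAddCommGroup H] [InnerProductSpace ℝ H]
    (F : H → H) (κ η t : ℝ) (ht : 0 ≤ t) (hη : 0 ≤ η) (hηκ : η ≤ κ)
    (a b : H) (hmono : η * ‖a - b‖ ^ 2 ≤ ⟪F a - F b, a - b⟫)
    (hlip : ‖F a - F b‖ ≤ κ * ‖a - b‖) :
    ‖(a - t • F a) - (b - t • F b)‖ ≤ (1 - t * η + t ^ 2 * κ ^ 2 / 2) * ‖a - b‖ := by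
  have hβ : (1:ℝ)/2 ≤ 1 - t * η + t ^ 2 * κ ^ 2 / 2 := by
    nlinarith [sq_nonneg (1 - t*η), mul_nonneg (mul_nonneg ht ht)
      (mul_nonneg (sub_nonneg.mpr hηκ) (by linarith : (0:ℝ) ≤ κ + η))]
  have hre : (a - t • F a) - (b - t • F b) = (a - b) - t • (F a - F b) := by
    rw [smul_sub]; abel
  have hexp : ‖(a - b) - t • (F a - F b)‖ ^ 2
      = ‖a - b‖ ^ 2 - 2 * (t * ⟪F a - F b, a - b⟫) + t ^ 2 * ‖F a - F b‖ ^ 2 := by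
    rw [norm_sub_sq_real, real_inner_smul_right, norm_smul, real_inner_comm]
    simp only [Real.norm_eq_abs, mul_pow, sq_abs]
  have h1 : t * (η * ‖a-b‖^2) ≤ t * ⟪F a - F b, a - b⟫ := mul_le_mul_of_nonneg_left hmono ht
  have h2 : t^2 * ‖F a - F b‖^2 ≤ t^2 * ((κ * ‖a-b‖)^2) :=
    mul_le_mul_of_nonneg_left (pow_le_pow_left₀ (norm_nonneg _) hlip 2) (sq_nonneg t)
  have hsq : ‖(a - b) - t • (F a - F b)‖ ^ 2 ≤ ((1 - t*η + t^2*κ^2/2) * ‖a-b‖)^2 := by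
    rw [hexp]
    nlinarith [h1, h2, sq_nonneg (t*(η - t*κ^2/2)*‖a-b‖)]
  rw [hre]
  exact sq_le_imp' (norm_nonneg _) (mul_nonneg (by linarith) (norm_nonneg _)) hsq

open scoped RealInnerProductSpace

private lemma star_ineq {H : Type*} [NormedAddCommGroup H] [InnerProductSpace ℝ H]
    (κ η αf t : ℝ) (ht : 0 < t) (hη : 0 ≤ η) (hηκ : η ≤ κ) (hαf : 0 ≤ αf)
    (u q Tu fu fq Fq FTu et : H)
    (hproj : ⟪(t • fu + (Tu - t • FTu) + et) - u, q - u⟫ ≤ 0)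
    (hcon : ‖(Tu - t • FTu) - (q - t • Fq)‖ ≤ (1 - t*η + t^2*κ^2/2) * ‖Tu - q‖)
    (hTu : ‖Tu - q‖ ≤ ‖u - q‖)
    (hflip : ‖fu - fq‖ ≤ αf * ‖u - q‖) :
    (η - αf - t*κ^2/2) * ‖u - q‖^2 ≤ ⟪fq - Fq, u - q⟫ + (‖et‖/t) * ‖u - q‖ := by
  set y := t • fu + (Tu - t • FTu) + et with hy
  set A := (Tu - t • FTu) - (q - t • Fq) with hA
  have hβ0 : (0:ℝ) ≤ 1 - t*η + t^2*κ^2/2 := by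
    nlinarith [sq_nonneg (1 - t*η), mul_nonneg (mul_nonneg ht.le ht.le)
      (mul_nonneg (sub_nonneg.mpr hηκ) (by linarith : (0:ℝ) ≤ κ + η))]
  have h1 : ‖u - q‖^2 ≤ ⟪y - q, u - q⟫ := by
    have e1 : ⟪u - q, u - q⟫ = ⟪u - y, u - q⟫ + ⟪y - q, u - q⟫ := by
      rw [← inner_add_left, show (u - y) + (y - q) = u - q by abel]
    have e2 : ⟪u - y, u - q⟫ = ⟪y - u, q - u⟫ := by
      rw [show u - y = -(y - u) by abel, show u - q = -(q - u) by abel, inner_neg_neg]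
    rw [← real_inner_self_eq_norm_sq, e1, e2]
    linarith
  have hdecomp : y - q = A + t • (fu - Fq) + et := by
    rw [hy, hA, smul_sub]; abel
  have h2 : ⟪y - q, u - q⟫ = ⟪A, u - q⟫ + t * ⟪fu - Fq, u - q⟫ + ⟪et, u - q⟫ := by
    rw [hdecomp, inner_add_left, inner_add_left, real_inner_smul_left]
  have hAle : ⟪A, u - q⟫ ≤ (1 - t*η + t^2*κ^2/2) * ‖u - q‖^2 := by
    have c1 := real_inner_le_norm A (u - q)
    have c2 : ‖A‖ * ‖u - q‖ ≤ ((1 - t*η + t^2*κ^2/2) * ‖Tu - q‖) * ‖u - q‖ :=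
      mul_le_mul_of_nonneg_right hcon (norm_nonneg _)
    have c3 : (1 - t*η + t^2*κ^2/2) * ‖Tu - q‖ ≤ (1 - t*η + t^2*κ^2/2) * ‖u - q‖ :=
      mul_le_mul_of_nonneg_left hTu hβ0
    have c4 : ((1 - t*η + t^2*κ^2/2) * ‖Tu - q‖) * ‖u - q‖
        ≤ ((1 - t*η + t^2*κ^2/2) * ‖u - q‖) * ‖u - q‖ :=
      mul_le_mul_of_nonneg_right c3 (norm_nonneg _)
    have c5 : ((1 - t*η + t^2*κ^2/2) * ‖u - q‖) * ‖u - q‖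
        = (1 - t*η + t^2*κ^2/2) * ‖u - q‖^2 := by ring
    linarith
  have hf2 : ⟪fu - Fq, u - q⟫ ≤ αf * ‖u - q‖^2 + ⟪fq - Fq, u - q⟫ := by
    have e3 : fu - Fq = (fu - fq) + (fq - Fq) := by abel
    rw [e3, inner_add_left]
    have c2 := real_inner_le_norm (fu - fq) (u - q)
    have c5 : ‖fu - fq‖ * ‖u - q‖ ≤ (αf * ‖u - q‖) * ‖u - q‖ :=
      mul_le_mul_of_nonneg_right hflip (norm_nonneg _)
    have c6 : (αf * ‖u - q‖) * ‖u - q‖ = αf * ‖u - q‖^2 := by ring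
    linarith
  have he2 : ⟪et, u - q⟫ ≤ ‖et‖ * ‖u - q‖ := real_inner_le_norm _ _
  rw [h2] at h1
  have h5 := mul_le_mul_of_nonneg_left hf2 ht.le
  have hkey : t * ((η - αf - t*κ^2/2) * ‖u - q‖^2)
      ≤ t * (⟪fq - Fq, u - q⟫ + ‖et‖/t * ‖u - q‖) := by
    have hrw : t * (⟪fq - Fq, u - q⟫ + ‖et‖/t * ‖u - q‖)
        = t * ⟪fq - Fq, u - q⟫ + ‖et‖ * ‖u - q‖ := by
      field_simp
    rw [hrw]
    nlinarith [h1, hAle, h5, he2]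
  exact le_of_mul_le_mul_left hkey ht

set_option maxHeartbeats 1000000 in
/-- Theorem 1, convergence part: the perturbed implicit iterates `x_t` converge strongly,
as `t → 0⁺`, to the unique solution `q*` of the variational inequality problem on
`C = Fix(T)`. -/
theorem implicit_algorithm_convergence
    {H : Type*} [NormedAddCommGroup H] [InnerProductSpace ℝ H] [CompleteSpace H]
    (Q : Set H) (hQne : Q.Nonempty) (hQclosed : IsClosed Q) (hQconvex : Convex ℝ Q)
    (T f F : H → H)
    (hTmaps : ∀ x ∈ Q, T x ∈ Q)
    (hTnonexp : ∀ x ∈ Q, ∀ y ∈ Q, ‖T x - T y‖ ≤ ‖x - y‖)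
    (C : Set H) (hC : C = {x | x ∈ Q ∧ T x = x}) (hCne : C.Nonempty)
    (αf : ℝ) (hαf : 0 ≤ αf)
    (hfLip : ∀ x ∈ Q, ∀ y ∈ Q, ‖f x - f y‖ ≤ αf * ‖x - y‖)
    (κ η : ℝ) (hκ : 0 < κ) (hη : 0 < η)
    (hFLip : ∀ x ∈ Q, ∀ y ∈ Q, ‖F x - F y‖ ≤ κ * ‖x - y‖)
    (hFmono : ∀ x ∈ Q, ∀ y ∈ Q, η * ‖x - y‖ ^ 2 ≤ ⟪F x - F y, x - y⟫)
    (hαη : αf < η)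
    (PQ : H → H)
    (hPQ : ∀ x : H, PQ x ∈ Q ∧ ∀ y ∈ Q, ⟪x - PQ x, y - PQ x⟫ ≤ 0)
    (δstar : ℝ) (hδstar : δstar = 2 * (η - αf) / κ ^ 2)
    (e : ℝ → H)
    (he : Tendsto (fun t => ‖e t‖ / t) (nhdsWithin 0 (Set.Ioi 0)) (nhds 0))
    (x : ℝ → H)
    (hx : ∀ t ∈ Set.Ioo 0 δstar,
      x t ∈ Q ∧ x t = PQ (t • f (x t) + (T (x t) - t • F (T (x t))) + e t))
    (qstar : H) (hqstarC : qstar ∈ C)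
    (hqstarVIP : ∀ p ∈ C, 0 ≤ ⟪F qstar - f qstar, p - qstar⟫) :
    Tendsto x (nhdsWithin 0 (Set.Ioo 0 δstar)) (nhds qstar) := by
  set L := nhdsWithin (0:ℝ) (Set.Ioo 0 δstar) with hLdef
  have hmemL : ∀ᶠ t in L, t ∈ Set.Ioo 0 δstar := eventually_mem_nhdsWithin
  rw [hC] at hqstarC
  obtain ⟨hqsQ, hqsT⟩ := hqstarC
  -- degenerate case: Q is a singleton
  by_cases hdeg : ∀ a ∈ Q, ∀ b ∈ Q, a = b
  · refine Tendsto.congr' ?_ (tendsto_const_nhds (x := qstar))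
    filter_upwards [hmemL] with t ht
    exact (hdeg _ hqsQ _ (hx t ht).1)
  push_neg at hdeg
  obtain ⟨a₀, ha₀, b₀, hb₀, hab⟩ := hdeg
  -- η ≤ κ
  have hd0 : (0:ℝ) < ‖a₀ - b₀‖ := by
    rw [norm_pos_iff]; exact sub_ne_zero.mpr hab
  have hηκ : η ≤ κ := by
    have h1 := hFmono a₀ ha₀ b₀ hb₀
    have h2 := hFLip a₀ ha₀ b₀ hb₀
    have h3 := real_inner_le_norm (F a₀ - F b₀) (a₀ - b₀)
    nlinarith [mul_le_mul_of_nonneg_right h2 hd0.le, mul_pos hd0 hd0]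
  -- the key inequality (★)
  have hstar : ∀ q, q ∈ Q → T q = q → ∀ t, t ∈ Set.Ioo 0 δstar →
      (η - αf - t*κ^2/2) * ‖x t - q‖^2
        ≤ ⟪f q - F q, x t - q⟫ + (‖e t‖/t) * ‖x t - q‖ := by
    intro q hqQ hqT t ht
    obtain ⟨hxQ, hxP⟩ := hx t ht
    have hTuQ : T (x t) ∈ Q := hTmaps _ hxQ
    have hcon := contraction_aux F κ η t ht.1.le hη.le hηκ (T (x t)) q
      (hFmono _ hTuQ _ hqQ) (hFLip _ hTuQ _ hqQ)
    have hTu : ‖T (x t) - q‖ ≤ ‖x t - q‖ := by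
      have h := hTnonexp (x t) hxQ q hqQ; rwa [hqT] at h
    have hproj : ⟪(t • f (x t) + (T (x t) - t • F (T (x t))) + e t) - x t, q - x t⟫ ≤ 0 := by
      have h := (hPQ (t • f (x t) + (T (x t) - t • F (T (x t))) + e t)).2 q hqQ
      rwa [← hxP] at h
    exact star_ineq κ η αf t ht.1 hη.le hηκ hαf (x t) q (T (x t)) (f (x t)) (f q) (F q)
      (F (T (x t))) (e t) hproj hcon hTu (hfLip _ hxQ _ hqQ)
  -- basic limits along L
  have htendL : Tendsto (fun t : ℝ => t) L (𝓝 0) := tendsto_id.mono_right nhdsWithin_le_nhds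
  have hεL : Tendsto (fun t => ‖e t‖ / t) L (𝓝 0) :=
    he.mono_left (nhdsWithin_mono 0 Set.Ioo_subset_Ioi_self)
  have heL : Tendsto (fun t => ‖e t‖) L (𝓝 0) := by
    have hcg : (fun t => ‖e t‖ / t * t) =ᶠ[L] fun t => ‖e t‖ := by
      filter_upwards [hmemL] with t ht
      exact div_mul_cancel₀ _ (ne_of_gt ht.1)
    exact Tendsto.congr' hcg (by simpa using hεL.mul htendL)
  have hc0pos : (0:ℝ) < (η - αf)/2 := by linarith
  have hsmall : ∀ᶠ t in L, t * κ^2 / 2 ≤ (η - αf)/2 := by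
    have h5 : Tendsto (fun t : ℝ => t * κ^2 / 2) L (𝓝 0) := by
      simpa using (htendL.mul_const (κ^2)).div_const 2
    exact h5.eventually (eventually_le_nhds hc0pos)
  have hε1 : ∀ᶠ t in L, ‖e t‖ / t ≤ 1 := hεL.eventually (eventually_le_nhds one_pos)
  -- boundedness
  obtain ⟨K, hKdef⟩ : ∃ K : ℝ, K = ‖f qstar - F qstar‖ := ⟨_, rfl⟩
  have hK0 : 0 ≤ K := hKdef ▸ norm_nonneg _
  obtain ⟨M₀, hM₀def⟩ : ∃ M₀ : ℝ, M₀ = (K + 1) / ((η - αf)/2) := ⟨_, rfl⟩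
  have hM₀0 : 0 ≤ M₀ := by
    rw [hM₀def]
    exact div_nonneg (by linarith) hc0pos.le
  have hbound : ∀ᶠ t in L, ‖x t - qstar‖ ≤ M₀ := by
    filter_upwards [hmemL, hsmall, hε1] with t htm hts htε
    have hst := hstar qstar hqsQ hqsT t htm
    set r := ‖x t - qstar‖ with hr
    have hr0 : 0 ≤ r := norm_nonneg _
    have hip : ⟪f qstar - F qstar, x t - qstar⟫ ≤ K * r := by
      rw [hKdef]; exact real_inner_le_norm _ _
    have h6 : (η - αf)/2 * r^2 ≤ (K + 1) * r := by
      nlinarith [mul_le_mul_of_nonneg_right (by linarith : (η-αf)/2 ≤ η - αf - t*κ^2/2)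
        (sq_nonneg r), mul_le_mul_of_nonneg_right htε hr0]
    have h7 : (η - αf)/2 * r ≤ K + 1 := by
      rcases eq_or_lt_of_le hr0 with h | h
      · rw [← h]; simp
        linarith
      · nlinarith
    rw [hM₀def, le_div_iff₀ hc0pos]
    linarith
  obtain ⟨M, hMdef⟩ : ∃ M : ℝ, M = M₀ + ‖qstar‖ := ⟨_, rfl⟩
  have hMx : ∀ᶠ t in L, ‖x t‖ ≤ M := by
    filter_upwards [hbound] with t htb
    calc ‖x t‖ = ‖(x t - qstar) + qstar‖ := by rw [sub_add_cancel]
      _ ≤ ‖x t - qstar‖ + ‖qstar‖ := norm_add_le _ _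
      _ ≤ M := by rw [hMdef]; linarith
  -- projection facts
  have hPQfix : ∀ w ∈ Q, PQ w = w := by
    intro w hw
    have h := (hPQ w).2 w hw
    have h0 : w - PQ w = 0 := real_inner_self_nonpos.mp h
    exact (sub_eq_zero.mp h0).symm
  have hPQnonexp : ∀ a b : H, ‖PQ a - PQ b‖ ≤ ‖a - b‖ := by
    intro a b
    have h1 := (hPQ a).2 (PQ b) (hPQ b).1
    have h2 := (hPQ b).2 (PQ a) (hPQ a).1
    have e1 : ⟪a - b, PQ a - PQ b⟫ = ⟪a - PQ a, PQ a - PQ b⟫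
        + ⟪PQ a - PQ b, PQ a - PQ b⟫ + ⟪PQ b - b, PQ a - PQ b⟫ := by
      rw [← inner_add_left, ← inner_add_left]
      congr 1; abel
    have e2 : ⟪a - PQ a, PQ a - PQ b⟫ = -⟪a - PQ a, PQ b - PQ a⟫ := by
      rw [← inner_neg_right]; congr 1; abel
    have e3 : ⟪PQ b - b, PQ a - PQ b⟫ = -⟪b - PQ b, PQ a - PQ b⟫ := by
      rw [← inner_neg_left]; congr 1; abel
    have e4 : ⟪PQ a - PQ b, PQ a - PQ b⟫ = ‖PQ a - PQ b‖^2 := real_inner_self_eq_norm_sq _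
    have hsq : ‖PQ a - PQ b‖^2 ≤ ⟪a - b, PQ a - PQ b⟫ := by
      rw [e1, e2, e3, e4]; linarith
    have hcs := real_inner_le_norm (a - b) (PQ a - PQ b)
    nlinarith [norm_nonneg (PQ a - PQ b), norm_nonneg (a - b)]
  -- ‖x t - T (x t)‖ → 0 along L
  obtain ⟨K₂, hK₂def⟩ : ∃ K₂ : ℝ, K₂ = ‖f qstar‖ + ‖F qstar‖ + (αf + κ) * M₀ := ⟨_, rfl⟩
  have hfixL : Tendsto (fun t => ‖x t - T (x t)‖) L (𝓝 0) := by
    have hub : ∀ᶠ t in L, ‖x t - T (x t)‖ ≤ t * K₂ + ‖e t‖ := by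
      filter_upwards [hmemL, hbound] with t htm htb
      obtain ⟨hxQ, hxP⟩ := hx t htm
      have hTfix : PQ (T (x t)) = T (x t) := hPQfix _ (hTmaps _ hxQ)
      have h3 : ‖x t - T (x t)‖
          ≤ ‖(t • f (x t) + (T (x t) - t • F (T (x t))) + e t) - T (x t)‖ := by
        calc ‖x t - T (x t)‖
            = ‖PQ (t • f (x t) + (T (x t) - t • F (T (x t))) + e t) - PQ (T (x t))‖ := by
              rw [← hxP, hTfix]
          _ ≤ _ := hPQnonexp _ _
      have e5 : (t • f (x t) + (T (x t) - t • F (T (x t))) + e t) - T (x t)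
          = t • (f (x t) - F (T (x t))) + e t := by
        rw [smul_sub]; abel
      have h4 : ‖t • (f (x t) - F (T (x t))) + e t‖
          ≤ t * ‖f (x t) - F (T (x t))‖ + ‖e t‖ := by
        calc ‖t • (f (x t) - F (T (x t))) + e t‖
            ≤ ‖t • (f (x t) - F (T (x t)))‖ + ‖e t‖ := norm_add_le _ _
          _ = t * ‖f (x t) - F (T (x t))‖ + ‖e t‖ := by
              rw [norm_smul, Real.norm_eq_abs, abs_of_pos htm.1]
      have hfb : ‖f (x t)‖ ≤ ‖f qstar‖ + αf * M₀ := by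
        have t1 : ‖f (x t)‖ ≤ ‖f qstar‖ + ‖f (x t) - f qstar‖ := by
          calc ‖f (x t)‖ = ‖f qstar + (f (x t) - f qstar)‖ := by
                rw [show f qstar + (f (x t) - f qstar) = f (x t) by abel]
            _ ≤ _ := norm_add_le _ _
        have t2 := hfLip (x t) hxQ qstar hqsQ
        nlinarith
      have hFb : ‖F (T (x t))‖ ≤ ‖F qstar‖ + κ * M₀ := by
        have t1 : ‖F (T (x t))‖ ≤ ‖F qstar‖ + ‖F (T (x t)) - F qstar‖ := by
          calc ‖F (T (x t))‖ = ‖F qstar + (F (T (x t)) - F qstar)‖ := by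
                rw [show F qstar + (F (T (x t)) - F qstar) = F (T (x t)) by abel]
            _ ≤ _ := norm_add_le _ _
        have t2 := hFLip (T (x t)) (hTmaps _ hxQ) qstar hqsQ
        have t3 : ‖T (x t) - qstar‖ ≤ ‖x t - qstar‖ := by
          have h := hTnonexp (x t) hxQ qstar hqsQ; rwa [hqsT] at h
        nlinarith
      have h6 : ‖f (x t) - F (T (x t))‖ ≤ K₂ := by
        calc ‖f (x t) - F (T (x t))‖ ≤ ‖f (x t)‖ + ‖F (T (x t))‖ := norm_sub_le _ _
          _ ≤ K₂ := by rw [hK₂def]; nlinarith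
      calc ‖x t - T (x t)‖ ≤ ‖t • (f (x t) - F (T (x t))) + e t‖ := by rw [← e5]; exact h3
        _ ≤ t * ‖f (x t) - F (T (x t))‖ + ‖e t‖ := h4
        _ ≤ t * K₂ + ‖e t‖ := by
            have := mul_le_mul_of_nonneg_left h6 htm.1.le; linarith
    exact squeeze_zero' (Eventually.of_forall fun t => norm_nonneg _) hub
      (by simpa using (htendL.mul_const K₂).add heL)
  -- pass to an ultrafilter
  rw [tendsto_iff_ultrafilter]
  intro U hU
  have hmemU : ∀ᶠ t in (U : Filter ℝ), t ∈ Set.Ioo 0 δstar := hmemL.filter_mono hU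
  have hMxU : ∀ᶠ t in (U : Filter ℝ), ‖x t‖ ≤ M := hMx.filter_mono hU
  have hboundU : ∀ᶠ t in (U : Filter ℝ), ‖x t - qstar‖ ≤ M₀ := hbound.filter_mono hU
  have hsmallU : ∀ᶠ t in (U : Filter ℝ), t * κ^2 / 2 ≤ (η - αf)/2 := hsmall.filter_mono hU
  have htendU : Tendsto (fun t : ℝ => t) (U : Filter ℝ) (𝓝 0) := htendL.mono_left hU
  have hεU : Tendsto (fun t => ‖e t‖ / t) (U : Filter ℝ) (𝓝 0) := hεL.mono_left hU
  have hfixU : Tendsto (fun t => ‖x t - T (x t)‖) (U : Filter ℝ) (𝓝 0) := hfixL.mono_left hU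
  -- construct the weak limit z
  have hlimex : ∀ v : H, ∃ aa : ℝ, Tendsto (fun t => ⟪x t, v⟫) (U : Filter ℝ) (𝓝 aa) := by
    intro v
    have hbdd : ∀ᶠ t in (U : Filter ℝ), ⟪x t, v⟫ ∈ Set.Icc (-(M * ‖v‖)) (M * ‖v‖) := by
      filter_upwards [hMxU] with t htb
      have habs : |⟪x t, v⟫| ≤ M * ‖v‖ := by
        calc |⟪x t, v⟫| ≤ ‖x t‖ * ‖v‖ := abs_real_inner_le_norm _ _
          _ ≤ M * ‖v‖ := mul_le_mul_of_nonneg_right htb (norm_nonneg v)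
      exact abs_le.mp habs
    obtain ⟨aa, -, ha⟩ := isCompact_Icc.ultrafilter_le_nhds
      (U.map fun t => ⟪x t, v⟫)
      (by rwa [Ultrafilter.coe_map, le_principal_iff, mem_map])
    rw [Ultrafilter.coe_map] at ha
    exact ⟨aa, ha⟩
  choose Φ hΦ using hlimex
  have hadd : ∀ v w, Φ (v + w) = Φ v + Φ w := by
    intro v w
    refine tendsto_nhds_unique (hΦ (v + w)) ?_
    simpa [inner_add_right] using (hΦ v).add (hΦ w)
  have hsmulΦ : ∀ (c : ℝ) (v : H), Φ (c • v) = c * Φ v := by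
    intro c v
    refine tendsto_nhds_unique (hΦ (c • v)) ?_
    simpa [real_inner_smul_right] using (hΦ v).const_mul c
  have hbddΦ : ∀ v, ‖Φ v‖ ≤ M * ‖v‖ := by
    intro v
    rw [Real.norm_eq_abs]
    refine le_of_tendsto (hΦ v).abs ?_
    filter_upwards [hMxU] with t htb
    calc |⟪x t, v⟫| ≤ ‖x t‖ * ‖v‖ := abs_real_inner_le_norm _ _
      _ ≤ M * ‖v‖ := mul_le_mul_of_nonneg_right htb (norm_nonneg v)
  obtain ⟨z, hzip⟩ : ∃ z : H, ∀ v, ⟪z, v⟫ = Φ v := by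
    set φ : H →ₗ[ℝ] ℝ :=
      { toFun := Φ, map_add' := hadd, map_smul' := fun c v => by simpa using hsmulΦ c v }
      with hφdef
    refine ⟨(InnerProductSpace.toDual ℝ H).symm (LinearMap.mkContinuous φ M hbddΦ),
      fun v => ?_⟩
    rw [← InnerProductSpace.toDual_apply_apply, LinearIsometryEquiv.apply_symm_apply]
    rfl
  have hwe : ∀ v : H, Tendsto (fun t => ⟪x t - z, v⟫) (U : Filter ℝ) (𝓝 0) := by
    intro v
    have h := (hΦ v).sub_const (Φ v)
    rw [sub_self] at h
    refine h.congr fun t => ?_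
    rw [inner_sub_left, hzip]
  have hwe' : ∀ v : H, Tendsto (fun t => ⟪v, x t - z⟫) (U : Filter ℝ) (𝓝 0) :=
    fun v => (hwe v).congr fun t => real_inner_comm _ _
  -- z ∈ Q
  have hzQ : z ∈ Q := by
    have hev : ∀ᶠ t in (U : Filter ℝ), ⟪z - PQ z, x t - PQ z⟫ ≤ 0 := by
      filter_upwards [hmemU] with t htm
      exact (hPQ z).2 (x t) (hx t htm).1
    have hl : Tendsto (fun t => ⟪z - PQ z, x t - PQ z⟫) (U : Filter ℝ)
        (𝓝 ⟪z - PQ z, z - PQ z⟫) := by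
      have h1 := (hwe' (z - PQ z)).add_const ⟪z - PQ z, z - PQ z⟫
      rw [zero_add] at h1
      refine h1.congr fun t => ?_
      rw [← inner_add_right]
      congr 1; abel
    have hle : ⟪z - PQ z, z - PQ z⟫ ≤ 0 := le_of_tendsto hl hev
    have h0 : z - PQ z = 0 := real_inner_self_nonpos.mp hle
    have hzp : z = PQ z := sub_eq_zero.mp h0
    rw [hzp]; exact (hPQ z).1
  -- T z = z (demiclosedness)
  have hTz : T z = z := by
    have hexp : ∀ t, ‖x t - T z‖^2 - ‖x t - z‖^2
        = ‖T z - z‖^2 - 2 * ⟪x t - z, T z - z⟫ := by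
      intro t
      have h : x t - T z = (x t - z) - (T z - z) := by abel
      rw [h, norm_sub_sq_real]
      ring
    have hTzlim : Tendsto (fun t => ‖x t - T z‖^2 - ‖x t - z‖^2) (U : Filter ℝ)
        (𝓝 (‖T z - z‖^2)) := by
      have h1 := tendsto_const_nhds (x := ‖T z - z‖^2) (f := (U : Filter ℝ))
      have h2 := ((hwe (T z - z)).const_mul 2)
      have h3 := h1.sub h2
      rw [mul_zero, sub_zero] at h3
      exact h3.congr fun t => (hexp t).symm
    have hub : ∀ᶠ t in (U : Filter ℝ), ‖x t - T z‖^2 - ‖x t - z‖^2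
        ≤ 2 * (M + ‖z‖) * ‖x t - T (x t)‖ + ‖x t - T (x t)‖^2 := by
      filter_upwards [hmemU, hMxU] with t htm htb
      have hxQ := (hx t htm).1
      have h1 : ‖x t - T z‖ ≤ ‖x t - T (x t)‖ + ‖x t - z‖ := by
        calc ‖x t - T z‖ ≤ ‖x t - T (x t)‖ + ‖T (x t) - T z‖ := by
              have := norm_add_le (x t - T (x t)) (T (x t) - T z)
              rwa [show (x t - T (x t)) + (T (x t) - T z) = x t - T z by abel] at this
          _ ≤ ‖x t - T (x t)‖ + ‖x t - z‖ := by
              have := hTnonexp (x t) hxQ z hzQ; linarith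
      have h2 : ‖x t - z‖ ≤ M + ‖z‖ := by
        calc ‖x t - z‖ ≤ ‖x t‖ + ‖z‖ := norm_sub_le _ _
          _ ≤ M + ‖z‖ := by linarith
      nlinarith [norm_nonneg (x t - T (x t)), norm_nonneg (x t - z), norm_nonneg (x t - T z)]
    have hub0 : Tendsto (fun t => 2 * (M + ‖z‖) * ‖x t - T (x t)‖ + ‖x t - T (x t)‖^2)
        (U : Filter ℝ) (𝓝 0) := by
      have h1 := hfixU.const_mul (2 * (M + ‖z‖))
      have h2 := hfixU.pow 2
      simpa using h1.add h2
    have h0 : ‖T z - z‖^2 ≤ 0 := le_of_tendsto_of_tendsto hTzlim hub0 hub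
    have h1 : ‖T z - z‖ = 0 := by nlinarith [norm_nonneg (T z - z)]
    exact sub_eq_zero.mp (norm_eq_zero.mp h1)
  have hzC : z ∈ C := by rw [hC]; exact ⟨hzQ, hTz⟩
  -- strong convergence along U to z
  have hip0 : Tendsto (fun t => ⟪f z - F z, x t - z⟫) (U : Filter ℝ) (𝓝 0) := hwe' (f z - F z)
  have hε2 : Tendsto (fun t => (‖e t‖/t) * ‖x t - z‖) (U : Filter ℝ) (𝓝 0) := by
    have h0 : ∀ᶠ t in (U : Filter ℝ), 0 ≤ (‖e t‖/t) * ‖x t - z‖ := by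
      filter_upwards [hmemU] with t htm
      exact mul_nonneg (div_nonneg (norm_nonneg _) htm.1.le) (norm_nonneg _)
    have hub : ∀ᶠ t in (U : Filter ℝ), (‖e t‖/t) * ‖x t - z‖ ≤ (‖e t‖/t) * (M + ‖z‖) := by
      filter_upwards [hmemU, hMxU] with t htm htb
      have h2 : ‖x t - z‖ ≤ M + ‖z‖ := by
        calc ‖x t - z‖ ≤ ‖x t‖ + ‖z‖ := norm_sub_le _ _
          _ ≤ M + ‖z‖ := by linarith
      exact mul_le_mul_of_nonneg_left h2 (div_nonneg (norm_nonneg _) htm.1.le)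
    exact squeeze_zero' h0 hub (by simpa using hεU.mul_const (M + ‖z‖))
  have hne : η - αf ≠ 0 := by linarith
  have hsq0 : Tendsto (fun t => ‖x t - z‖^2) (U : Filter ℝ) (𝓝 0) := by
    have hub : ∀ᶠ t in (U : Filter ℝ), ‖x t - z‖^2
        ≤ (2/(η - αf)) * (⟪f z - F z, x t - z⟫ + (‖e t‖/t) * ‖x t - z‖) := by
      filter_upwards [hmemU, hsmallU] with t htm hts
      have h := hstar z hzQ hTz t htm
      have h8 : (η - αf)/2 * ‖x t - z‖^2
          ≤ ⟪f z - F z, x t - z⟫ + (‖e t‖/t) * ‖x t - z‖ := by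
        nlinarith [mul_le_mul_of_nonneg_right (by linarith : (η-αf)/2 ≤ η - αf - t*κ^2/2)
          (sq_nonneg ‖x t - z‖)]
      have hpos : (0:ℝ) < 2/(η - αf) := div_pos two_pos (by linarith)
      have h9 := mul_le_mul_of_nonneg_left h8 hpos.le
      calc ‖x t - z‖^2 = (2/(η - αf)) * ((η - αf)/2 * ‖x t - z‖^2) := by
            rw [← mul_assoc, div_mul_div_comm, mul_comm (2:ℝ) (η - αf),
              div_self (by intro hcon0; exact hne (by nlinarith [hcon0]) : (η - αf) * 2 ≠ 0), one_mul]
        _ ≤ _ := h9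
    exact squeeze_zero' (Eventually.of_forall fun t => sq_nonneg _) hub
      (by simpa using (hip0.add hε2).const_mul (2/(η - αf)))
  have hnorm0 : Tendsto (fun t => ‖x t - z‖) (U : Filter ℝ) (𝓝 0) := by
    have h := (Real.continuous_sqrt.tendsto 0).comp hsq0
    rw [Real.sqrt_zero] at h
    exact h.congr fun t => Real.sqrt_sq (norm_nonneg _)
  have hstrong : Tendsto x (U : Filter ℝ) (𝓝 z) := by
    rw [← tendsto_sub_nhds_zero_iff]
    exact tendsto_zero_iff_norm_tendsto_zero.mpr hnorm0
  -- identification z = qstar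
  have hc : Tendsto (fun t : ℝ => η - αf - t*κ^2/2) (U : Filter ℝ) (𝓝 (η - αf)) := by
    have h1 := (htendU.mul_const (κ^2)).div_const 2
    have h2 := (tendsto_const_nhds (x := η - αf) (f := (U : Filter ℝ))).sub h1
    simpa using h2
  have hnq : Tendsto (fun t => ‖x t - qstar‖) (U : Filter ℝ) (𝓝 ‖z - qstar‖) :=
    (hstrong.sub_const qstar).norm
  have f1 : Tendsto (fun t => (η - αf - t*κ^2/2) * ‖x t - qstar‖^2) (U : Filter ℝ)
      (𝓝 ((η - αf) * ‖z - qstar‖^2)) := hc.mul (hnq.pow 2)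
  have finner : Tendsto (fun t => ⟪f qstar - F qstar, x t - qstar⟫) (U : Filter ℝ)
      (𝓝 ⟪f qstar - F qstar, z - qstar⟫) :=
    tendsto_const_nhds.inner (hstrong.sub_const qstar)
  have f2 : Tendsto (fun t => ⟪f qstar - F qstar, x t - qstar⟫ + (‖e t‖/t) * ‖x t - qstar‖)
      (U : Filter ℝ) (𝓝 (⟪f qstar - F qstar, z - qstar⟫ + 0 * ‖z - qstar‖)) :=
    finner.add (hεU.mul hnq)
  have hev : ∀ᶠ t in (U : Filter ℝ),
      (η - αf - t*κ^2/2) * ‖x t - qstar‖^2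
        ≤ ⟪f qstar - F qstar, x t - qstar⟫ + (‖e t‖/t) * ‖x t - qstar‖ := by
    filter_upwards [hmemU] with t htm
    exact hstar qstar hqsQ hqsT t htm
  have hineq := le_of_tendsto_of_tendsto f1 f2 hev
  rw [zero_mul, add_zero] at hineq
  have hVIP := hqstarVIP z hzC
  have hipneg : ⟪f qstar - F qstar, z - qstar⟫ ≤ 0 := by
    have h : f qstar - F qstar = -(F qstar - f qstar) := by abel
    rw [h, inner_neg_left]; linarith
  have h10 : ‖z - qstar‖^2 ≤ 0 := by nlinarith
  have h11 : ‖z - qstar‖ = 0 := by nlinarith [norm_nonneg (z - qstar)]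
  have hzq : z = qstar := sub_eq_zero.mp (norm_eq_zero.mp h11)
  exact hzq ▸ hstrong
end

section
/- (Lemma 1.) Let {a_n} be a sequence of nonnegative real numbers such that a_{n+1} ≤ (1 − γ_n)a_n + γ_n r_n + δ_n for all n ≥ 0, where {γ_n} is a sequence in [0,1] and {r_n}, {δ_n} are real sequences satisfying: (1) ∑ γ_n = +∞; (2) ∑ |δ_n| < +∞; (3) limsup_{n→∞} r_n ≤ 0. Then a_n → 0. -/
open Filter

lemma xu_key (a γ r δ : ℕ → ℝ) (N : ℕ) (ε : ℝ) (hε : 0 ≤ ε)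
    (hγ : ∀ n, γ n ∈ Set.Icc (0 : ℝ) 1)
    (hrec : ∀ n, a (n + 1) ≤ (1 - γ n) * a n + γ n * r n + δ n)
    (hr : ∀ i, r (N + i) ≤ ε) :
    ∀ n, a (N + n) ≤ (∏ i ∈ Finset.range n, (1 - γ (N + i))) * a N + ε +
      ∑ i ∈ Finset.range n, |δ (N + i)| := by
  intro n
  induction n with
  | zero =>
    simp only [Nat.add_zero, Finset.range_zero, Finset.prod_empty, Finset.sum_empty, one_mul,
      add_zero]
    linarith
  | succ n ih =>
    have hg := hγ (N + n)
    have h1 : 0 ≤ 1 - γ (N + n) := by linarith [hg.2]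
    have hS : 0 ≤ ∑ i ∈ Finset.range n, |δ (N + i)| :=
      Finset.sum_nonneg fun i _ => abs_nonneg _
    rw [Finset.prod_range_succ, Finset.sum_range_succ]
    have h2 := hrec (N + n)
    have h3 : N + (n + 1) = (N + n) + 1 := rfl
    rw [h3]
    have hmul := mul_le_mul_of_nonneg_left ih h1
    have hrr := mul_le_mul_of_nonneg_left (hr n) hg.1
    have hd : δ (N + n) ≤ |δ (N + n)| := le_abs_self _
    nlinarith [mul_nonneg hg.1 hS]

/-- Lemma 1 (Xu): if `a_{n+1} ≤ (1 - γ_n) a_n + γ_n r_n + δ_n` with `γ_n ∈ [0,1]`,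
`∑ γ_n = +∞`, `∑ |δ_n| < +∞` and `limsup r_n ≤ 0`, then `a_n → 0`. -/
theorem xu_lemma
    (a γ r δ : ℕ → ℝ)
    (ha : ∀ n, 0 ≤ a n)
    (hγ : ∀ n, γ n ∈ Set.Icc (0 : ℝ) 1)
    (hrec : ∀ n, a (n + 1) ≤ (1 - γ n) * a n + γ n * r n + δ n)
    (hγsum : Tendsto (fun n => ∑ i ∈ Finset.range n, γ i) atTop atTop)
    (hδ : Summable fun n => |δ n|)
    (hr : limsup (fun n => (r n : EReal)) atTop ≤ 0) :
    Tendsto a atTop (nhds 0) := by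
  rw [Metric.tendsto_atTop]
  intro ε hε
  have hε4 : 0 < ε / 4 := by linarith
  -- eventually r n < ε/4
  have hrlt : ∀ᶠ n in atTop, (r n : EReal) < ((ε / 4 : ℝ) : EReal) :=
    eventually_lt_of_limsup_lt (lt_of_le_of_lt hr (by exact_mod_cast hε4))
  obtain ⟨N1, hN1⟩ := eventually_atTop.mp hrlt
  -- eventually tail of |δ| < ε/4
  have htail : Tendsto (fun i => ∑' k, |δ (k + i)|) atTop (nhds 0) :=
    tendsto_sum_nat_add fun n => |δ n|
  obtain ⟨N2, hN2⟩ := eventually_atTop.mp (htail.eventually (gt_mem_nhds hε4))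
  set N := max N1 N2 with hN
  have hrN : ∀ i, r (N + i) ≤ ε / 4 := fun i => by
    have := hN1 (N + i) (le_trans (le_max_left _ _) (Nat.le_add_right _ _))
    exact_mod_cast this.le
  have hδtail : ∑' k, |δ (k + N)| < ε / 4 :=
    hN2 N (le_max_right _ _)
  have key := xu_key a γ r δ N (ε / 4) hε4.le hγ hrec hrN
  -- partial sums of the tail are bounded by the tsum
  have hδsumN : Summable fun k => |δ (k + N)| := hδ.comp_injective (add_left_injective N)
  have hSbound : ∀ n, ∑ i ∈ Finset.range n, |δ (N + i)| ≤ ∑' k, |δ (k + N)| := by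
    intro n
    have : ∑ i ∈ Finset.range n, |δ (N + i)| = ∑ i ∈ Finset.range n, |δ (i + N)| := by
      apply Finset.sum_congr rfl; intro i _; rw [Nat.add_comm]
    rw [this]
    exact Summable.sum_le_tsum _ (fun k _ => abs_nonneg _) hδsumN
  -- the product tends to 0
  set P : ℕ → ℝ := fun n => ∏ i ∈ Finset.range n, (1 - γ (N + i)) with hP
  have hPnonneg : ∀ n, 0 ≤ P n := fun n =>
    Finset.prod_nonneg fun i _ => by linarith [(hγ (N + i)).2]
  have hPle : ∀ n, P n ≤ Real.exp (-(∑ i ∈ Finset.range n, γ (N + i))) := by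
    intro n
    calc P n ≤ ∏ i ∈ Finset.range n, Real.exp (-(γ (N + i))) :=
          Finset.prod_le_prod (fun i _ => by linarith [(hγ (N + i)).2])
            (fun i _ => by linarith [Real.add_one_le_exp (-(γ (N + i)))])
      _ = Real.exp (∑ i ∈ Finset.range n, -(γ (N + i))) := (Real.exp_sum _ _).symm
      _ = Real.exp (-(∑ i ∈ Finset.range n, γ (N + i))) := by rw [Finset.sum_neg_distrib]
  have hTsum : Tendsto (fun n => ∑ i ∈ Finset.range n, γ (N + i)) atTop atTop := by
    have heq : ∀ n, ∑ i ∈ Finset.range n, γ (N + i)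
        = (∑ i ∈ Finset.range (n + N), γ i) - ∑ i ∈ Finset.range N, γ i := by
      intro n
      rw [Nat.add_comm n N, Finset.sum_range_add]
      ring
    simp only [heq, sub_eq_add_neg]
    exact tendsto_atTop_add_const_right atTop _ (hγsum.comp (tendsto_add_atTop_nat N))
  have hexp : Tendsto (fun n => Real.exp (-(∑ i ∈ Finset.range n, γ (N + i)))) atTop (nhds 0) :=
    Real.tendsto_exp_atBot.comp (tendsto_neg_atTop_atBot.comp hTsum)
  have hPtend : Tendsto P atTop (nhds 0) :=
    squeeze_zero hPnonneg hPle hexp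
  have hPa : Tendsto (fun n => P n * a N) atTop (nhds 0) := by
    simpa using hPtend.mul_const (a N)
  obtain ⟨n0, hn0⟩ := eventually_atTop.mp (hPa.eventually (gt_mem_nhds hε4))
  refine ⟨N + n0, fun m hm => ?_⟩
  have hm' : N + (m - N) = m := by omega
  have h1 := key (m - N)
  have h2 := hn0 (m - N) (by omega)
  have h3 := hSbound (m - N)
  rw [hm'] at h1
  rw [Real.dist_eq, sub_zero, abs_of_nonneg (ha m)]
  calc a m ≤ P (m - N) * a N + ε / 4 + ∑ i ∈ Finset.range (m - N), |δ (N + i)| := h1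
    _ < ε / 4 + ε / 4 + ε / 4 := by linarith
    _ < ε := by linarith
end

section
/- (Lemma 2, Suzuki.) Let {z_n} and {w_n} be two bounded sequences in a Banach space E and let {β_n} be a sequence in [0,1] with 0 < liminf_{n→∞} β_n ≤ limsup_{n→∞} β_n < 1. Suppose that z_{n+1} = β_n z_n + (1 − β_n) w_n for all n ≥ 0 and that limsup_{n→∞} (‖w_{n+1} − w_n‖ − ‖z_{n+1} − z_n‖) ≤ 0. Then ‖z_n − w_n‖ → 0. -/
open Filter

/-- Auxiliary error-amplification sequence for the proof of Suzuki's lemma. -/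
noncomputable def suzukiE (c : ℝ) : ℕ → ℝ
  | 0 => 0
  | (j + 1) => (suzukiE c j + ((j : ℝ) + 3)) / c

lemma suzukiE_zero (c : ℝ) : suzukiE c 0 = 0 := rfl

lemma suzukiE_succ (c : ℝ) (j : ℕ) :
    suzukiE c (j + 1) = (suzukiE c j + ((j : ℝ) + 3)) / c := rfl

lemma suzukiE_nonneg {c : ℝ} (hc : 0 < c) (j : ℕ) : 0 ≤ suzukiE c j := by
  induction j with
  | zero => simp [suzukiE_zero]
  | succ j ih =>
    rw [suzukiE_succ]
    apply div_nonneg _ hc.le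
    positivity

set_option maxHeartbeats 1000000 in
/-- Lemma 2 (Suzuki): if `z_{n+1} = β_n z_n + (1 - β_n) w_n` with `{z_n}`, `{w_n}` bounded,
`0 < liminf β_n ≤ limsup β_n < 1`, and
`limsup (‖w_{n+1} - w_n‖ - ‖z_{n+1} - z_n‖) ≤ 0`, then `‖z_n - w_n‖ → 0`. -/
theorem suzuki_lemma
    {E : Type*} [NormedAddCommGroup E] [NormedSpace ℝ E] [CompleteSpace E]
    (z w : ℕ → E)
    (hz : Bornology.IsBounded (Set.range z))
    (hw : Bornology.IsBounded (Set.range w))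
    (β : ℕ → ℝ) (hβ : ∀ n, β n ∈ Set.Icc (0 : ℝ) 1)
    (hliminf : 0 < liminf β atTop)
    (hlimsup : limsup β atTop < 1)
    (hrec : ∀ n, z (n + 1) = β n • z n + (1 - β n) • w n)
    (hlim : limsup (fun n => ‖w (n + 1) - w n‖ - ‖z (n + 1) - z n‖) atTop ≤ 0) :
    Tendsto (fun n => ‖z n - w n‖) atTop (nhds 0) := by
  obtain ⟨Mz, hMz⟩ := isBounded_iff_forall_norm_le.1 hz
  obtain ⟨Mw, hMw⟩ := isBounded_iff_forall_norm_le.1 hw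
  set t : ℕ → ℝ := fun n => ‖z n - w n‖ with ht
  set a : ℕ → ℝ := fun n => ‖w (n + 1) - w n‖ - ‖z (n + 1) - z n‖ with ha
  set M : ℝ := max Mz Mw with hMdef
  have hzM : ∀ n, ‖z n‖ ≤ M := fun n =>
    le_trans (hMz _ ⟨n, rfl⟩) (le_max_left _ _)
  have hwM : ∀ n, ‖w n‖ ≤ M := fun n =>
    le_trans (hMw _ ⟨n, rfl⟩) (le_max_right _ _)
  have ht2M : ∀ n, t n ≤ 2 * M := fun n => by
    have := norm_sub_le (z n) (w n)
    have h1 := hzM n; have h2 := hwM n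
    simp only [ht]; linarith
  have hbt_above : IsBoundedUnder (· ≤ ·) atTop t :=
    isBoundedUnder_of ⟨2 * M, fun n => ht2M n⟩
  have hbt_below : IsBoundedUnder (· ≥ ·) atTop t :=
    isBoundedUnder_of ⟨0, fun n => norm_nonneg _⟩
  -- the norm of the z-increment
  have hdz : ∀ n, ‖z (n + 1) - z n‖ = (1 - β n) * t n := by
    intro n
    have hid : z (n + 1) - z n = (1 - β n) • (w n - z n) := by
      rw [hrec n]; module
    rw [hid, norm_smul, Real.norm_of_nonneg (by linarith [(hβ n).2]),
      norm_sub_rev]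
  -- key: limsup t ≤ 0
  have key : limsup t atTop ≤ 0 := by
    by_contra hcon
    push_neg at hcon
    set r : ℝ := limsup t atTop with hr
    -- the constant c with c ≤ β n ≤ 1 - c eventually
    set L1 : ℝ := liminf β atTop with hL1
    set L2 : ℝ := limsup β atTop with hL2
    set c : ℝ := min (L1 / 2) ((1 - L2) / 2) with hcdef
    have hc : 0 < c := lt_min (by linarith) (by linarith)
    have hc1 : c ≤ 1 / 2 := le_trans (min_le_right _ _) (by
      have : 0 ≤ L2 := le_limsup_of_frequently_le
        (Frequently.of_forall fun n => (hβ n).1)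
        (isBoundedUnder_of ⟨1, fun n => (hβ n).2⟩)
      linarith)
    have hβev : ∀ᶠ n in atTop, c ≤ β n ∧ β n ≤ 1 - c := by
      have h1 : ∀ᶠ n in atTop, L1 / 2 < β n :=
        eventually_lt_of_lt_liminf (by linarith)
          (isBoundedUnder_of ⟨0, fun n => (hβ n).1⟩)
      have h2 : ∀ᶠ n in atTop, β n < (L2 + 1) / 2 :=
        eventually_lt_of_limsup_lt (by linarith)
          (isBoundedUnder_of ⟨1, fun n => (hβ n).2⟩)
      filter_upwards [h1, h2] with n hn1 hn2
      constructor
      · calc c ≤ L1 / 2 := min_le_left _ _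
          _ ≤ β n := hn1.le
      · have : c ≤ (1 - L2) / 2 := min_le_right _ _
        linarith
    -- choose k₀
    obtain ⟨k₀, hk₀⟩ := exists_nat_gt (2 * M / (c * r))
    have hcr : 0 < c * r := mul_pos hc hcon
    have hk₀r : 2 * M < (k₀ : ℝ) * (c * r) := by
      rw [div_lt_iff₀ hcr] at hk₀; exact hk₀
    -- the error amplification sequence E
    set El : ℕ → ℝ := suzukiE c with hEl
    have hEl0 : El 0 = 0 := suzukiE_zero c
    have hEls : ∀ j, El (j + 1) = (El j + ((j : ℝ) + 3)) / c := suzukiE_succ c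
    have hElnn : ∀ j, 0 ≤ El j := suzukiE_nonneg hc
    set K : ℝ := El k₀ with hKdef
    have hK0 : 0 ≤ K := hElnn k₀
    -- choose ε
    set num : ℝ := r + (k₀ : ℝ) * c * r - 2 * M with hnumdef
    have hnum : 0 < num := by
      have hk₀r' : 2 * M < (k₀ : ℝ) * c * r := by linarith [hk₀r, mul_assoc (k₀ : ℝ) c r]
      rw [hnumdef]; linarith [hk₀r', hcon]
    set Dd : ℝ := 1 + (k₀ : ℝ) * c * ((k₀ : ℝ) + 1) + K with hDddef
    have hDd : 0 < Dd := by
      have h1 : 0 ≤ (k₀ : ℝ) * c * ((k₀ : ℝ) + 1) := by positivity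
      rw [hDddef]; linarith
    set ε : ℝ := num / (2 * Dd) with hεdef
    have hε : 0 < ε := div_pos hnum (by linarith)
    have hεDd : ε * Dd = num / 2 := by
      rw [hεdef]; field_simp
    -- choose m
    have haev : ∀ᶠ n in atTop, a n < ε :=
      eventually_lt_of_limsup_lt (lt_of_le_of_lt hlim hε)
        (isBoundedUnder_of ⟨2 * M, fun n => by
          have h1 := norm_sub_le (w (n + 1)) (w n)
          have h2 := hwM (n + 1); have h3 := hwM n
          have h4 := norm_nonneg (z (n + 1) - z n)
          simp only [ha]; linarith⟩)
    have htev : ∀ᶠ n in atTop, t n < r + ε :=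
      eventually_lt_of_limsup_lt (by linarith) hbt_above
    obtain ⟨m, hm⟩ := eventually_atTop.1 (hβev.and (haev.and htev))
    -- choose N
    have hfreq : ∃ᶠ n in atTop, r - ε < t n :=
      frequently_lt_of_lt_limsup hbt_below.isCoboundedUnder_le (by linarith)
    obtain ⟨N, htN, hNm⟩ := (hfreq.and_eventually (eventually_ge_atTop (m + k₀))).exists
    -- basic consequences on the window
    have hmn : ∀ n, m ≤ n → (c ≤ β n ∧ β n ≤ 1 - c) ∧ a n < ε ∧ t n < r + ε := hm
    have hdw : ∀ n, m ≤ n → ‖w (n + 1) - w n‖ ≤ ε + (1 - β n) * t n := by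
      intro n hn
      have h1 := (hmn n hn).2.1
      have h2 := hdz n
      simp only [ha] at h1
      linarith
    have hstep : ∀ n, m ≤ n → t (n + 1) ≤ t n + ε := by
      intro n hn
      have hid : z (n + 1) - w (n + 1) = β n • (z n - w n) + (w n - w (n + 1)) := by
        rw [hrec n]; module
      have h1 : t (n + 1) ≤ β n * t n + ‖w (n + 1) - w n‖ := by
        calc t (n + 1) = ‖β n • (z n - w n) + (w n - w (n + 1))‖ := by
              simp only [ht]; rw [hid]
          _ ≤ ‖β n • (z n - w n)‖ + ‖w n - w (n + 1)‖ := norm_add_le _ _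
          _ = β n * t n + ‖w (n + 1) - w n‖ := by
              rw [norm_smul, Real.norm_of_nonneg (hβ n).1,
                norm_sub_rev (w n) (w (n + 1))]
      have h2 := hdw n hn
      have h3 := (hβ n).2
      have h4 := norm_nonneg (z n - w n)
      linarith [h2, h1]
    have hF2 : ∀ j l, m ≤ l → t (l + j) ≤ t l + (j : ℝ) * ε := by
      intro j
      induction j with
      | zero => intro l _; simp
      | succ j ih =>
        intro l hl
        have h1 := ih l hl
        have h2 : t (l + j + 1) ≤ t (l + j) + ε := hstep (l + j) (le_trans hl (Nat.le_add_right _ _))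
        have : l + (j + 1) = l + j + 1 := by omega
        rw [this]
        push_cast
        linarith
    have hwin : ∀ l, N - k₀ ≤ l → l ≤ N → r - ((k₀ : ℝ) + 1) * ε ≤ t l := by
      intro l h1 h2
      have hlm : m ≤ l := by omega
      have h3 := hF2 (N - l) l hlm
      have h4 : l + (N - l) = N := by omega
      rw [h4] at h3
      have h5 : ((N - l : ℕ) : ℝ) ≤ (k₀ : ℝ) := by
        have h5' : N - l ≤ k₀ := by omega
        exact_mod_cast h5'
      have h6 : ((N - l : ℕ) : ℝ) * ε ≤ (k₀ : ℝ) * ε :=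
        mul_le_mul_of_nonneg_right h5 hε.le
      linarith
    -- the partial sums S
    set S : ℕ → ℝ := fun j => ∑ l ∈ Finset.range j, (1 - β (N - 1 - l)) * t (N - 1 - l)
      with hSdef
    have hS0 : S 0 = 0 := by simp [hSdef]
    have hSs : ∀ j, S (j + 1) = S j + (1 - β (N - 1 - j)) * t (N - 1 - j) := fun j =>
      Finset.sum_range_succ _ j
    -- bound on ‖w N - w (N - j)‖
    have hF4 : ∀ j, j ≤ k₀ → ‖w N - w (N - j)‖ ≤ (j : ℝ) * ε + S j := by
      intro j
      induction j with
      | zero => intro _; simp [hS0]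
      | succ j ih =>
        intro hj
        have hj' : j ≤ k₀ := by omega
        have hNk : m + k₀ ≤ N := hNm
        set i : ℕ := N - 1 - j with hidef
        have hi1 : i + 1 = N - j := by omega
        have him : m ≤ i := by omega
        have htri : ‖w N - w (N - (j + 1))‖ ≤ ‖w N - w (N - j)‖ + ‖w (i + 1) - w i‖ := by
          have he : N - (j + 1) = i := by omega
          rw [he]
          calc ‖w N - w i‖ = ‖(w N - w (i + 1)) + (w (i + 1) - w i)‖ := by abel_nf
            _ ≤ ‖w N - w (i + 1)‖ + ‖w (i + 1) - w i‖ := norm_add_le _ _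
            _ = ‖w N - w (N - j)‖ + ‖w (i + 1) - w i‖ := by rw [hi1]
        have h2 := hdw i him
        have h3 := ih hj'
        have h4 := hSs j
        push_cast
        calc ‖w N - w (N - (j + 1))‖ ≤ ‖w N - w (N - j)‖ + ‖w (i + 1) - w i‖ := htri
          _ ≤ ((j : ℝ) * ε + S j) + (ε + (1 - β i) * t i) := add_le_add h3 h2
          _ = ((j : ℝ) + 1) * ε + S (j + 1) := by rw [h4]; ring
    -- the main induction
    have hF6 : ∀ j, j ≤ k₀ → t N + S j - ε * El j ≤ ‖w N - z (N - j)‖ := by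
      intro j
      induction j with
      | zero =>
        intro _
        simp only [hS0, hEl0, Nat.sub_zero, mul_zero, add_zero, sub_zero]
        rw [norm_sub_rev]
      | succ j ih =>
        intro hj
        have hj' : j ≤ k₀ := by omega
        have hNk : m + k₀ ≤ N := hNm
        set i : ℕ := N - (j + 1) with hidef
        have hi1 : i + 1 = N - j := by omega
        have hi2 : N - 1 - j = i := by omega
        have him : m ≤ i := by omega
        obtain ⟨⟨hci, hci'⟩, hai, hti⟩ := hmn i him
        have hβi0 : 0 ≤ β i := (hβ i).1
        have hβi1 : β i ≤ 1 := (hβ i).2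
        -- the identity
        have hid : w N - z (i + 1) = β i • (w N - z i) + (1 - β i) • (w N - w i) := by
          rw [hrec i]; module
        have hup : ‖w N - z (i + 1)‖ ≤ β i * ‖w N - z i‖ + (1 - β i) * ‖w N - w i‖ := by
          rw [hid]
          calc ‖β i • (w N - z i) + (1 - β i) • (w N - w i)‖
              ≤ ‖β i • (w N - z i)‖ + ‖(1 - β i) • (w N - w i)‖ := norm_add_le _ _
            _ = β i * ‖w N - z i‖ + (1 - β i) * ‖w N - w i‖ := by
                rw [norm_smul, norm_smul, Real.norm_of_nonneg hβi0,
                  Real.norm_of_nonneg (by linarith)]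
        have hIH : t N + S j - ε * El j ≤ ‖w N - z (i + 1)‖ := by
          rw [hi1]; exact ih hj'
        have hW : ‖w N - w i‖ ≤ ((j : ℝ) + 1) * ε + S (j + 1) := by
          have := hF4 (j + 1) hj
          have he : N - (j + 1) = i := rfl
          rw [he] at this
          push_cast at this
          linarith
        -- lower bound on β i * ‖w N - z i‖
        have hlow : t N + S j - ε * El j - (1 - β i) * (((j : ℝ) + 1) * ε + S (j + 1))
            ≤ β i * ‖w N - z i‖ := by
          have h1 : (1 - β i) * ‖w N - w i‖ ≤ (1 - β i) * (((j : ℝ) + 1) * ε + S (j + 1)) :=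
            mul_le_mul_of_nonneg_left hW (by linarith)
          linarith [hup, hIH]
        -- the arithmetic step
        set q : ℝ := (El j + ((j : ℝ) + 3)) / c with hqdef
        have hq0 : 0 ≤ q := div_nonneg (by have := hElnn j; positivity) hc.le
        have hcq : c * q = El j + ((j : ℝ) + 3) := by
          rw [hqdef]; field_simp
        have h4 : El j + ((j : ℝ) + 3) ≤ β i * q := by
          rw [← hcq]; exact mul_le_mul_of_nonneg_right hci hq0
        have h5 : ε * (El j + ((j : ℝ) + 3)) ≤ ε * (β i * q) :=
          mul_le_mul_of_nonneg_left h4 hε.le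
        have hXT : -(2 * ε) ≤ t N - t i := by linarith [htN, hti]
        have h1' : (1 - β i) * (-(2 * ε)) ≤ (1 - β i) * (t N - t i) :=
          mul_le_mul_of_nonneg_left hXT (by linarith)
        have h2' : 1 * (-(2 * ε)) ≤ (1 - β i) * (-(2 * ε)) :=
          mul_le_mul_of_nonpos_right (by linarith) (by linarith)
        have h3' : (1 - β i) * (((j : ℝ) + 1) * ε) ≤ 1 * (((j : ℝ) + 1) * ε) :=
          mul_le_mul_of_nonneg_right (by linarith) (by positivity)
        have harith : β i * (t N + S (j + 1) - ε * q)
            ≤ t N + S j - ε * El j - (1 - β i) * (((j : ℝ) + 1) * ε + S (j + 1)) := by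
          have hSsj := hSs j
          rw [hi2] at hSsj
          rw [hSsj]; linarith [h1', h2', h3', h5]
        have hfin : β i * (t N + S (j + 1) - ε * q) ≤ β i * ‖w N - z i‖ :=
          le_trans harith hlow
        have hβipos : 0 < β i := lt_of_lt_of_le hc hci
        have hgoal : t N + S (j + 1) - ε * q ≤ ‖w N - z i‖ :=
          le_of_mul_le_mul_left (by linarith [hfin]) hβipos
        have hEq : El (j + 1) = q := by rw [hEls, hqdef]
        rw [hEq]
        exact hgoal
    -- final contradiction
    have hfinal := hF6 k₀ le_rfl
    have hbd : ‖w N - z (N - k₀)‖ ≤ 2 * M := by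
      have h1 := norm_sub_le (w N) (z (N - k₀))
      have h2 := hwM N; have h3 := hzM (N - k₀)
      linarith
    have hSlow : (k₀ : ℝ) * (c * (r - ((k₀ : ℝ) + 1) * ε)) ≤ S k₀ := by
      have h1 : ∀ l ∈ Finset.range k₀, c * (r - ((k₀ : ℝ) + 1) * ε) ≤
          (1 - β (N - 1 - l)) * t (N - 1 - l) := by
        intro l hl
        rw [Finset.mem_range] at hl
        have hNk : m + k₀ ≤ N := hNm
        set idx : ℕ := N - 1 - l with hidx
        have hidx1 : N - k₀ ≤ idx := by omega
        have hidx2 : idx ≤ N := by omega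
        have hidxm : m ≤ idx := by omega
        have hw1 := hwin idx hidx1 hidx2
        have hcb := (hmn idx hidxm).1.2
        have htnn : (0 : ℝ) ≤ t idx := norm_nonneg _
        have hc2 : c ≤ 1 - β idx := by linarith
        calc c * (r - ((k₀ : ℝ) + 1) * ε) ≤ c * t idx :=
              mul_le_mul_of_nonneg_left hw1 hc.le
          _ ≤ (1 - β idx) * t idx := mul_le_mul_of_nonneg_right hc2 htnn
      have h2 := Finset.card_nsmul_le_sum (Finset.range k₀)
        (fun l => (1 - β (N - 1 - l)) * t (N - 1 - l)) (c * (r - ((k₀ : ℝ) + 1) * ε)) h1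
      simpa [hSdef, nsmul_eq_mul] using h2
    have hKε : ε * El k₀ = ε * K := by rw [hKdef]
    rw [hKε] at hfinal
    -- put together
    have hεnn := hε.le
    linarith [hfinal, hbd, hSlow, htN, hεDd, hnumdef, hDddef, hnum]
  -- conclude
  have h0 : (0 : ℝ) ≤ liminf t atTop :=
    le_liminf_of_le hbt_above.isCoboundedUnder_ge
      (Eventually.of_forall fun n => norm_nonneg _)
  exact tendsto_of_le_liminf_of_limsup_le h0 key hbt_above hbt_below
end

section
/- (Lemma 3, demiclosedness principle.) Let {x_n} be a sequence in Q. If {x_n} converges weakly to some x ∈ H and ‖x_n − T x_n‖ → 0, then x ∈ Q and Tx = x. -/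
open scoped RealInnerProductSpace
open Filter

/-- Lemma 3 (demiclosedness principle): if a sequence in `Q` converges weakly to `x` and
`‖x_n - T x_n‖ → 0`, then `x ∈ Q` and `T x = x`. -/
theorem demiclosedness_principle
    {H : Type*} [NormedAddCommGroup H] [InnerProductSpace ℝ H] [CompleteSpace H]
    (Q : Set H) (hQne : Q.Nonempty) (hQclosed : IsClosed Q) (hQconvex : Convex ℝ Q)
    (T : H → H)
    (hTmaps : ∀ x ∈ Q, T x ∈ Q)
    (hTnonexp : ∀ x ∈ Q, ∀ y ∈ Q, ‖T x - T y‖ ≤ ‖x - y‖)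
    (x : ℕ → H) (hxQ : ∀ n, x n ∈ Q)
    (p : H)
    (hweak : ∀ v : H, Tendsto (fun n => ⟪x n, v⟫) atTop (nhds ⟪p, v⟫))
    (hfix : Tendsto (fun n => ‖x n - T (x n)‖) atTop (nhds 0)) :
    p ∈ Q ∧ T p = p := by
  -- Step 1 : `p ∈ Q` via projection onto the closed convex set `Q`.
  obtain ⟨q, hqQ, hq⟩ := exists_norm_eq_iInf_of_complete_convex hQne
    (hQclosed.isComplete) hQconvex p
  have hproj : ∀ w ∈ Q, ⟪p - q, w - q⟫ ≤ 0 :=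
    (norm_eq_iInf_iff_real_inner_le_zero hQconvex hqQ).mp hq
  have hlim1 : Tendsto (fun n => ⟪p - q, x n - q⟫) atTop (nhds (‖p - q‖ ^ 2)) := by
    have h := (hweak (p - q)).sub_const ⟪q, p - q⟫
    have heq : (fun n => ⟪p - q, x n - q⟫) = fun n => ⟪x n, p - q⟫ - ⟪q, p - q⟫ := by
      funext n
      rw [real_inner_comm, inner_sub_left]
    have heq2 : ‖p - q‖ ^ 2 = ⟪p, p - q⟫ - ⟪q, p - q⟫ := by
      rw [← inner_sub_left, real_inner_self_eq_norm_sq]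
    rw [heq, heq2]
    exact h
  have hle : ‖p - q‖ ^ 2 ≤ 0 :=
    le_of_tendsto hlim1 (Eventually.of_forall fun n => hproj _ (hxQ n))
  have hpq : p = q := by
    have : ‖p - q‖ = 0 := by nlinarith [norm_nonneg (p - q)]
    have := norm_sub_eq_zero_iff.mp this
    exact this
  have hpQ : p ∈ Q := hpq ▸ hqQ
  refine ⟨hpQ, ?_⟩
  -- Step 2 : weakly convergent sequences are bounded (Banach–Steinhaus).
  obtain ⟨C, hC⟩ : ∃ C, ∀ n, ‖x n - p‖ ≤ C := by
    have hbs := banach_steinhaus (g := fun n => innerSL ℝ (x n - p)) (fun v => by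
      have h : Tendsto (fun n => ⟪x n - p, v⟫) atTop (nhds 0) := by
        have h := (hweak v).sub_const ⟪p, v⟫
        simpa [inner_sub_left] using h
      obtain ⟨C, hC⟩ := h.norm.bddAbove_range
      exact ⟨C, fun n => hC ⟨n, rfl⟩⟩)
    obtain ⟨C', hC'⟩ := hbs
    exact ⟨C', fun n => by have h := hC' n; rwa [innerSL_apply_norm] at h⟩
  have hCnn : 0 ≤ C := le_trans (norm_nonneg _) (hC 0)
  -- key inequality
  have key : ∀ n, ‖p - T p‖ ^ 2 ≤
      ‖x n - T (x n)‖ ^ 2 + 2 * C * ‖x n - T (x n)‖ + 2 * ⟪x n - p, T p - p⟫ := by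
    intro n
    have h1 : ‖x n - T p‖ ≤ ‖x n - T (x n)‖ + ‖x n - p‖ := by
      calc ‖x n - T p‖ = ‖(x n - T (x n)) + (T (x n) - T p)‖ := by
              rw [sub_add_sub_cancel]
        _ ≤ ‖x n - T (x n)‖ + ‖T (x n) - T p‖ := norm_add_le _ _
        _ ≤ ‖x n - T (x n)‖ + ‖x n - p‖ := by
            have := hTnonexp (x n) (hxQ n) p hpQ
            linarith
    have h2 : ‖x n - T p‖ ^ 2 =
        ‖x n - p‖ ^ 2 + 2 * ⟪x n - p, p - T p⟫ + ‖p - T p‖ ^ 2 := by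
      have := @norm_add_sq_real H _ _ (x n - p) (p - T p)
      simpa [sub_add_sub_cancel] using this
    have h3 : ⟪x n - p, p - T p⟫ = - ⟪x n - p, T p - p⟫ := by
      rw [← inner_neg_right, neg_sub]
    have h4 : ‖x n - T p‖ ^ 2 ≤ (‖x n - T (x n)‖ + ‖x n - p‖) ^ 2 := by
      have hn := norm_nonneg (x n - T p)
      nlinarith
    have h5 := hC n
    have hn2 := norm_nonneg (x n - T (x n))
    nlinarith [h2, h4]
  -- the right-hand side tends to 0
  have hrhs : Tendsto (fun n => ‖x n - T (x n)‖ ^ 2 + 2 * C * ‖x n - T (x n)‖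
      + 2 * ⟪x n - p, T p - p⟫) atTop (nhds 0) := by
    have ha : Tendsto (fun n => ‖x n - T (x n)‖ ^ 2) atTop (nhds 0) := by
      simpa using hfix.pow 2
    have hb : Tendsto (fun n => 2 * C * ‖x n - T (x n)‖) atTop (nhds 0) := by
      simpa using hfix.const_mul (2 * C)
    have hc : Tendsto (fun n => 2 * ⟪x n - p, T p - p⟫) atTop (nhds 0) := by
      have h := (hweak (T p - p)).sub_const ⟪p, T p - p⟫
      have h' : Tendsto (fun n => ⟪x n - p, T p - p⟫) atTop (nhds 0) := by
        simpa [inner_sub_left] using h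
      simpa using h'.const_mul 2
    simpa using (ha.add hb).add hc
  have hfinal : ‖p - T p‖ ^ 2 ≤ 0 :=
    ge_of_tendsto hrhs (Eventually.of_forall key)
  have : ‖p - T p‖ = 0 := by nlinarith [norm_nonneg (p - T p)]
  have := norm_sub_eq_zero_iff.mp this
  exact this.symm
end

section
/- Let δ₀ ∈ (0, δ₀*) where δ₀* = 2(η − α)/κ², and set σ₀ = η − α − κ²δ₀/2. Let {α_n} ⊆ (0, δ₀] with ∑ α_n = +∞, let {β_n} ⊆ [0,1] with limsup β_n < 1, and let {e_n} ⊆ H with ∑ ‖e_n‖ < +∞ or ‖e_n‖/α_n → 0. Let x_0 ∈ Q and define x_{n+1} = β_n x_n + (1 − β_n) P_Q(α_n f(x_n) + (T x_n − α_n F(T x_n)) + e_n), and let y_0 = x_0 and y_{n+1} = β_n y_n + (1 − β_n) P_Q(α_n f(y_n) + (T y_n − α_n F(T y_n))). Then ‖y_n − x_n‖ → 0. -/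
open scoped RealInnerProductSpace
open Filter


/-- Products of `(1 - t k)` tend to zero when `∑ t = ∞`, `t k ∈ [0,1]`. -/
lemma hpa_aux_prod (t : ℕ → ℝ) (ht0 : ∀ n, 0 ≤ t n) (ht1 : ∀ n, t n ≤ 1)
    (htsum : Tendsto (fun n => ∑ i ∈ Finset.range n, t i) atTop atTop) (N : ℕ) :
    Tendsto (fun n => ∏ k ∈ Finset.Ico N n, (1 - t k)) atTop (nhds 0) := by
  have hlow : ∀ n, (0:ℝ) ≤ ∏ k ∈ Finset.Ico N n, (1 - t k) := fun n =>
    Finset.prod_nonneg fun k _ => by linarith [ht1 k]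
  have hub : ∀ n, N ≤ n → ∏ k ∈ Finset.Ico N n, (1 - t k)
      ≤ Real.exp ((∑ i ∈ Finset.range N, t i) - ∑ i ∈ Finset.range n, t i) := by
    intro n hn
    have h1 : ∏ k ∈ Finset.Ico N n, (1 - t k) ≤ ∏ k ∈ Finset.Ico N n, Real.exp (-(t k)) :=
      Finset.prod_le_prod (fun k _ => by linarith [ht1 k])
        (fun k _ => by linarith [Real.add_one_le_exp (-(t k))])
    have h2 : ∏ k ∈ Finset.Ico N n, Real.exp (-(t k))
        = Real.exp ((∑ i ∈ Finset.range N, t i) - ∑ i ∈ Finset.range n, t i) := by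
      rw [← Real.exp_sum, Finset.sum_neg_distrib, Finset.sum_Ico_eq_sub _ hn]
      ring_nf
    linarith [h1, h2.le, h2.ge]
  have hexp : Tendsto (fun n => Real.exp ((∑ i ∈ Finset.range N, t i)
      - ∑ i ∈ Finset.range n, t i)) atTop (nhds 0) := by
    apply Real.tendsto_exp_atBot.comp
    apply tendsto_atBot_add_const_left
    exact tendsto_neg_atTop_atBot.comp htsum
  refine tendsto_of_tendsto_of_tendsto_of_le_of_le' tendsto_const_nhds hexp
    (Eventually.of_forall hlow) ?_
  filter_upwards [eventually_ge_atTop N] with n hn using hub n hn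

lemma hpa_aux_ind (d t c : ℕ → ℝ) (ht0 : ∀ n, 0 ≤ t n) (ht1 : ∀ n, t n ≤ 1)
    (hc : ∀ n, 0 ≤ c n) (N : ℕ)
    (hrec : ∀ n, N ≤ n → d (n + 1) ≤ (1 - t n) * d n + c n) :
    ∀ n, N ≤ n → d n ≤ d N * ∏ k ∈ Finset.Ico N n, (1 - t k)
      + ∑ k ∈ Finset.Ico N n, c k := by
  intro n hn
  induction n with
  | zero =>
    have : N = 0 := Nat.le_zero.mp hn
    subst this; simp
  | succ n ih =>
    rcases Nat.lt_or_ge n N with hlt | hge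
    · have : N = n + 1 := by omega
      subst this; simp
    · have hih := ih hge
      have h1 := hrec n hge
      rw [Finset.prod_Ico_succ_top hge, Finset.sum_Ico_succ_top hge]
      have hS0 : (0:ℝ) ≤ ∑ k ∈ Finset.Ico N n, c k := Finset.sum_nonneg fun k _ => hc k
      have ht : (0:ℝ) ≤ 1 - t n := by linarith [ht1 n]
      nlinarith [mul_le_mul_of_nonneg_left hih ht, mul_nonneg (ht0 n) hS0]

lemma hpa_aux_ind2 (d t : ℕ → ℝ) (ht0 : ∀ n, 0 ≤ t n) (ht1 : ∀ n, t n ≤ 1)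
    (ε : ℝ) (hε : 0 ≤ ε) (N : ℕ)
    (hrec : ∀ n, N ≤ n → d (n + 1) ≤ (1 - t n) * d n + t n * ε) :
    ∀ n, N ≤ n → d n ≤ d N * ∏ k ∈ Finset.Ico N n, (1 - t k) + ε := by
  intro n hn
  induction n with
  | zero =>
    have : N = 0 := Nat.le_zero.mp hn
    subst this; simp [hε]
  | succ n ih =>
    rcases Nat.lt_or_ge n N with hlt | hge
    · have : N = n + 1 := by omega
      subst this; simp [hε]
    · have hih := ih hge
      have h1 := hrec n hge
      rw [Finset.prod_Ico_succ_top hge]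
      have ht : (0:ℝ) ≤ 1 - t n := by linarith [ht1 n]
      nlinarith [mul_le_mul_of_nonneg_left hih ht, mul_nonneg (ht0 n) hε]

lemma hpa_aux_xu (d t : ℕ → ℝ) (hd : ∀ n, 0 ≤ d n)
    (ht0 : ∀ n, 0 ≤ t n) (ht1 : ∀ n, t n ≤ 1)
    (htsum : Tendsto (fun n => ∑ i ∈ Finset.range n, t i) atTop atTop)
    (h : ∀ ε : ℝ, 0 < ε → ∃ N, ∀ n, N ≤ n →
      d n ≤ d N * ∏ k ∈ Finset.Ico N n, (1 - t k) + ε) :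
    Tendsto d atTop (nhds 0) := by
  rw [Metric.tendsto_atTop]
  intro ε hε
  obtain ⟨N, hN⟩ := h (ε / 2) (by positivity)
  have hP : Tendsto (fun n => d N * ∏ k ∈ Finset.Ico N n, (1 - t k)) atTop (nhds 0) := by
    simpa using (hpa_aux_prod t ht0 ht1 htsum N).const_mul (d N)
  rw [Metric.tendsto_atTop] at hP
  obtain ⟨M, hM⟩ := hP (ε / 2) (by positivity)
  refine ⟨max N M, fun n hn => ?_⟩
  have h1 := hN n (le_of_max_le_left hn)
  have h2 := hM n (le_of_max_le_right hn)
  rw [Real.dist_eq, sub_zero] at h2 ⊢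
  rw [abs_of_nonneg (hd n)]
  calc d n ≤ d N * ∏ k ∈ Finset.Ico N n, (1 - t k) + ε / 2 := h1
    _ ≤ |d N * ∏ k ∈ Finset.Ico N n, (1 - t k)| + ε / 2 := by
        linarith [le_abs_self (d N * ∏ k ∈ Finset.Ico N n, (1 - t k))]
    _ < ε := by linarith


set_option maxHeartbeats 1000000 in
/-- The perturbed sequence `{x_n}` and the unperturbed sequence `{y_n}` of the algorithm
(HPA) are asymptotically close: `‖y_n - x_n‖ → 0`. -/
theorem hpa_perturbed_unperturbed_close
    {H : Type*} [NormedAddCommGroup H] [InnerProductSpace ℝ H] [CompleteSpace H]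
    (Q : Set H) (hQne : Q.Nonempty) (hQclosed : IsClosed Q) (hQconvex : Convex ℝ Q)
    (T f F : H → H)
    (hTmaps : ∀ x ∈ Q, T x ∈ Q)
    (hTnonexp : ∀ x ∈ Q, ∀ y ∈ Q, ‖T x - T y‖ ≤ ‖x - y‖)
    (αf : ℝ) (hαf : 0 ≤ αf)
    (hfLip : ∀ x ∈ Q, ∀ y ∈ Q, ‖f x - f y‖ ≤ αf * ‖x - y‖)
    (κ η : ℝ) (hκ : 0 < κ) (hη : 0 < η)
    (hFLip : ∀ x ∈ Q, ∀ y ∈ Q, ‖F x - F y‖ ≤ κ * ‖x - y‖)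
    (hFmono : ∀ x ∈ Q, ∀ y ∈ Q, η * ‖x - y‖ ^ 2 ≤ ⟪F x - F y, x - y⟫)
    (hαη : αf < η)
    (PQ : H → H)
    (hPQ : ∀ x : H, PQ x ∈ Q ∧ ∀ y ∈ Q, ⟪x - PQ x, y - PQ x⟫ ≤ 0)
    (δ₀ : ℝ) (hδ₀ : δ₀ ∈ Set.Ioo 0 (2 * (η - αf) / κ ^ 2))
    (σ₀ : ℝ) (hσ₀ : σ₀ = η - αf - κ ^ 2 * δ₀ / 2)
    (α β : ℕ → ℝ) (e : ℕ → H)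
    (hα : ∀ n, α n ∈ Set.Ioc 0 δ₀)
    (hαsum : Tendsto (fun n => ∑ i ∈ Finset.range n, α i) atTop atTop)
    (hβ : ∀ n, β n ∈ Set.Icc (0 : ℝ) 1)
    (hβlimsup : limsup β atTop < 1)
    (he : (Summable fun n => ‖e n‖) ∨ Tendsto (fun n => ‖e n‖ / α n) atTop (nhds 0))
    (x y : ℕ → H) (hx0 : x 0 ∈ Q) (hy0 : y 0 = x 0)
    (hxrec : ∀ n, x (n + 1) = β n • x n
      + (1 - β n) • PQ (α n • f (x n) + (T (x n) - α n • F (T (x n))) + e n))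
    (hyrec : ∀ n, y (n + 1) = β n • y n
      + (1 - β n) • PQ (α n • f (y n) + (T (y n) - α n • F (T (y n))))) :
    Tendsto (fun n => ‖y n - x n‖) atTop (nhds 0) := by
  obtain ⟨hδ₀pos, hδ₀lt⟩ := hδ₀
  have hκ2 : (0:ℝ) < κ ^ 2 := by positivity
  have hδκ : δ₀ * κ ^ 2 < 2 * (η - αf) := (lt_div_iff₀ hκ2).mp hδ₀lt
  have hσ₀pos : 0 < σ₀ := by rw [hσ₀]; nlinarith
  -- membership of the iterates in Q
  have hxQ : ∀ n, x n ∈ Q := by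
    intro n; induction n with
    | zero => exact hx0
    | succ n ih =>
      rw [hxrec n]
      exact hQconvex ih (hPQ _).1 (hβ n).1 (by linarith [(hβ n).2]) (by ring)
  have hyQ : ∀ n, y n ∈ Q := by
    intro n; induction n with
    | zero => rw [hy0]; exact hx0
    | succ n ih =>
      rw [hyrec n]
      exact hQconvex ih (hPQ _).1 (hβ n).1 (by linarith [(hβ n).2]) (by ring)
  -- PQ is nonexpansive
  have hPQne : ∀ a b : H, ‖PQ a - PQ b‖ ≤ ‖a - b‖ := by
    intro a b
    have e1 : ⟪a - PQ a, PQ b - PQ a⟫ ≤ 0 := (hPQ a).2 (PQ b) (hPQ b).1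
    have e2 : ⟪b - PQ b, PQ a - PQ b⟫ ≤ 0 := (hPQ b).2 (PQ a) (hPQ a).1
    have h3 : 0 ≤ ⟪a - PQ a, PQ a - PQ b⟫ := by
      have hh : ⟪a - PQ a, PQ a - PQ b⟫ = -⟪a - PQ a, PQ b - PQ a⟫ := by
        rw [← inner_neg_right]; congr 1; abel
      rw [hh]; linarith
    have h5 : ⟪a - b, PQ a - PQ b⟫
        = ⟪a - PQ a, PQ a - PQ b⟫ - ⟪b - PQ b, PQ a - PQ b⟫ + ‖PQ a - PQ b‖ ^ 2 := by
      rw [← real_inner_self_eq_norm_sq, ← inner_sub_left, ← @inner_add_left ℝ]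
      congr 1; abel
    have key : ‖PQ a - PQ b‖ ^ 2 ≤ ⟪a - b, PQ a - PQ b⟫ := by rw [h5]; linarith
    have cs := real_inner_le_norm (a - b) (PQ a - PQ b)
    nlinarith [norm_nonneg (PQ a - PQ b), norm_nonneg (a - b)]
  -- trivial case: Q is a singleton
  by_cases hsub : ∀ a ∈ Q, ∀ b ∈ Q, a = b
  · have hz : ∀ n, ‖y n - x n‖ = 0 := by
      intro n
      rw [norm_eq_zero, sub_eq_zero]
      exact hsub _ (hyQ n) _ (hxQ n)
    have heq : (fun n => ‖y n - x n‖) = fun _ => (0:ℝ) := funext hz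
    rw [heq]; exact tendsto_const_nhds
  push_neg at hsub
  obtain ⟨a0, ha0, b0, hb0, hab0⟩ := hsub
  have hηκ : η ≤ κ := by
    have h1 := hFmono a0 ha0 b0 hb0
    have h2 := real_inner_le_norm (F a0 - F b0) (a0 - b0)
    have h3 := hFLip a0 ha0 b0 hb0
    have h4 : 0 < ‖a0 - b0‖ := by
      rw [norm_pos_iff, sub_ne_zero]; exact hab0
    nlinarith [mul_le_mul_of_nonneg_right h3 (norm_nonneg (a0 - b0)), mul_pos h4 h4]
  -- the contraction factor
  set s : ℝ := η - κ ^ 2 * δ₀ / 2 with hs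
  have hσ₀s : σ₀ = s - αf := by rw [hσ₀, hs]; ring
  have hfac : ∀ n, 0 ≤ 1 - α n * s := by
    intro n
    obtain ⟨hαpos, hαle⟩ := hα n
    rw [hs]
    nlinarith [sq_nonneg (κ ^ 2 * α n - η), mul_nonneg hαpos.le (sub_nonneg.2 hαle),
      sq_nonneg κ, mul_self_le_mul_self hη.le hηκ, mul_pos hκ2 hκ2,
      mul_nonneg (mul_nonneg hαpos.le (sub_nonneg.2 hαle)) (mul_pos hκ2 hκ2).le]
  have hcontr : ∀ n, ∀ u ∈ Q, ∀ v ∈ Q,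
      ‖(u - α n • F u) - (v - α n • F v)‖ ≤ (1 - α n * s) * ‖u - v‖ := by
    intro n u hu v hv
    obtain ⟨hαpos, hαle⟩ := hα n
    have hmono := hFmono u hu v hv
    have hlip := hFLip u hu v hv
    have hrw : (u - α n • F u) - (v - α n • F v) = (u - v) - α n • (F u - F v) := by
      rw [smul_sub]; abel
    have hexp : ‖(u - α n • F u) - (v - α n • F v)‖ ^ 2
        ≤ ((1 - α n * s) * ‖u - v‖) ^ 2 := by
      rw [hrw, norm_sub_sq_real, real_inner_smul_right, norm_smul,
        Real.norm_eq_abs, abs_of_pos hαpos]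
      have hi : η * ‖u - v‖ ^ 2 ≤ ⟪u - v, F u - F v⟫ := by
        rw [real_inner_comm]; exact hmono
      have hb2 : ‖F u - F v‖ * ‖F u - F v‖ ≤ (κ * ‖u - v‖) * (κ * ‖u - v‖) :=
        mul_self_le_mul_self (norm_nonneg _) hlip
      rw [hs]
      nlinarith [sq_nonneg ‖u - v‖, mul_pos hαpos hαpos,
        mul_nonneg (mul_nonneg (mul_nonneg hαpos.le (sub_nonneg.2 hαle)) hκ2.le)
          (sq_nonneg ‖u - v‖),
        sq_nonneg (α n * (η - κ ^ 2 * δ₀ / 2) * ‖u - v‖),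
        mul_le_mul_of_nonneg_left hi (by linarith : (0:ℝ) ≤ 2 * α n)]
    exact le_of_pow_le_pow_left₀ two_ne_zero
      (mul_nonneg (hfac n) (norm_nonneg _)) hexp
  -- the one–step recursion estimate
  set t : ℕ → ℝ := fun n => (1 - β n) * (α n * σ₀) with htdef
  have hrec : ∀ n, ‖y (n + 1) - x (n + 1)‖
      ≤ (1 - t n) * ‖y n - x n‖ + (1 - β n) * ‖e n‖ := by
    intro n
    obtain ⟨hαpos, hαle⟩ := hα n
    obtain ⟨hβ0, hβ1⟩ := hβ n
    set a : H := α n • f (x n) + (T (x n) - α n • F (T (x n))) + e n with hadef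
    set b : H := α n • f (y n) + (T (y n) - α n • F (T (y n))) with hbdef
    have hstep1 : y (n + 1) - x (n + 1)
        = β n • (y n - x n) + (1 - β n) • (PQ b - PQ a) := by
      rw [hxrec n, hyrec n, smul_sub, smul_sub]; abel
    have hT := hTnonexp (y n) (hyQ n) (x n) (hxQ n)
    have hcon := hcontr n (T (y n)) (hTmaps _ (hyQ n)) (T (x n)) (hTmaps _ (hxQ n))
    have hf := hfLip (y n) (hyQ n) (x n) (hxQ n)
    have hab : ‖b - a‖ ≤ (1 - α n * σ₀) * ‖y n - x n‖ + ‖e n‖ := by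
      have hba : b - a = (α n • (f (y n) - f (x n))
          + ((T (y n) - α n • F (T (y n))) - (T (x n) - α n • F (T (x n))))) + -(e n) := by
        rw [hadef, hbdef, smul_sub]; abel
      rw [hba]
      have h1 : ‖(α n • (f (y n) - f (x n))
          + ((T (y n) - α n • F (T (y n))) - (T (x n) - α n • F (T (x n))))) + -(e n)‖
          ≤ ‖α n • (f (y n) - f (x n))‖
            + ‖(T (y n) - α n • F (T (y n))) - (T (x n) - α n • F (T (x n)))‖ + ‖e n‖ := by
        calc _ ≤ ‖α n • (f (y n) - f (x n))
              + ((T (y n) - α n • F (T (y n))) - (T (x n) - α n • F (T (x n))))‖ + ‖-(e n)‖ :=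
            norm_add_le _ _
          _ ≤ _ := by
            rw [norm_neg]
            gcongr
            exact norm_add_le _ _
      have h2 : ‖α n • (f (y n) - f (x n))‖ ≤ α n * (αf * ‖y n - x n‖) := by
        rw [norm_smul, Real.norm_eq_abs, abs_of_pos hαpos]
        exact mul_le_mul_of_nonneg_left hf hαpos.le
      have h3 : ‖(T (y n) - α n • F (T (y n))) - (T (x n) - α n • F (T (x n)))‖
          ≤ (1 - α n * s) * ‖y n - x n‖ :=
        hcon.trans (mul_le_mul_of_nonneg_left hT (hfac n))
      have : (1 - α n * σ₀) * ‖y n - x n‖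
          = α n * (αf * ‖y n - x n‖) + (1 - α n * s) * ‖y n - x n‖ := by
        rw [hσ₀s]; ring
      linarith
    have h4 : ‖y (n + 1) - x (n + 1)‖
        ≤ β n * ‖y n - x n‖ + (1 - β n) * ‖PQ b - PQ a‖ := by
      rw [hstep1]
      calc ‖β n • (y n - x n) + (1 - β n) • (PQ b - PQ a)‖
          ≤ ‖β n • (y n - x n)‖ + ‖(1 - β n) • (PQ b - PQ a)‖ := norm_add_le _ _
        _ = β n * ‖y n - x n‖ + (1 - β n) * ‖PQ b - PQ a‖ := by
          rw [norm_smul, norm_smul, Real.norm_eq_abs, Real.norm_eq_abs,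
            abs_of_nonneg hβ0, abs_of_nonneg (by linarith : (0:ℝ) ≤ 1 - β n)]
    have h6 : ‖PQ b - PQ a‖ ≤ (1 - α n * σ₀) * ‖y n - x n‖ + ‖e n‖ := (hPQne b a).trans hab
    calc ‖y (n + 1) - x (n + 1)‖
        ≤ β n * ‖y n - x n‖ + (1 - β n) * ‖PQ b - PQ a‖ := h4
      _ ≤ β n * ‖y n - x n‖
          + (1 - β n) * ((1 - α n * σ₀) * ‖y n - x n‖ + ‖e n‖) := by
        have := mul_le_mul_of_nonneg_left h6 (by linarith : (0:ℝ) ≤ 1 - β n)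
        linarith
      _ = (1 - t n) * ‖y n - x n‖ + (1 - β n) * ‖e n‖ := by rw [htdef]; ring
  -- properties of t
  have ht0 : ∀ n, 0 ≤ t n := by
    intro n
    obtain ⟨hαpos, _⟩ := hα n
    exact mul_nonneg (by linarith [(hβ n).2]) (mul_nonneg hαpos.le hσ₀pos.le)
  have ht1 : ∀ n, t n ≤ 1 := by
    intro n
    obtain ⟨hαpos, hαle⟩ := hα n
    obtain ⟨hβ0, hβ1⟩ := hβ n
    have hf' := hfac n
    have hσ₀le : α n * σ₀ ≤ α n * s := by
      apply mul_le_mul_of_nonneg_left _ hαpos.le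
      rw [hσ₀s]; linarith
    have h0 : 0 ≤ α n * σ₀ := mul_nonneg hαpos.le hσ₀pos.le
    show (1 - β n) * (α n * σ₀) ≤ 1
    nlinarith
  -- eventually β n < m < 1
  obtain ⟨m, hm1, hmN⟩ : ∃ m : ℝ, m < 1 ∧ ∃ N₀, ∀ n, N₀ ≤ n → β n ≤ m := by
    refine ⟨(limsup β atTop + 1) / 2, by linarith, ?_⟩
    have hbd : IsBoundedUnder (· ≤ ·) atTop β :=
      isBoundedUnder_of ⟨1, fun n => (hβ n).2⟩
    have hev : ∀ᶠ n in atTop, β n < (limsup β atTop + 1) / 2 :=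
      eventually_lt_of_limsup_lt (by linarith) hbd
    obtain ⟨N₀, hN₀⟩ := eventually_atTop.mp hev
    exact ⟨N₀, fun n hn => (hN₀ n hn).le⟩
  obtain ⟨N₀, hN₀⟩ := hmN
  -- divergence of ∑ t
  have htsum : Tendsto (fun n => ∑ i ∈ Finset.range n, t i) atTop atTop := by
    have hconst : (0:ℝ) < (1 - m) * σ₀ := mul_pos (by linarith) hσ₀pos
    have hbound : ∀ n, N₀ ≤ n →
        (1 - m) * σ₀ * ((∑ i ∈ Finset.range n, α i) - ∑ i ∈ Finset.range N₀, α i)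
          ≤ ∑ i ∈ Finset.range n, t i := by
      intro n hn
      have h1 : ∑ i ∈ Finset.Ico N₀ n, (1 - m) * σ₀ * α i
          ≤ ∑ i ∈ Finset.Ico N₀ n, t i := by
        apply Finset.sum_le_sum
        intro k hk
        obtain ⟨hk1, _⟩ := Finset.mem_Ico.mp hk
        obtain ⟨hαpos, _⟩ := hα k
        have hβk := hN₀ k hk1
        have : (1 - m) * (α k * σ₀) ≤ (1 - β k) * (α k * σ₀) :=
          mul_le_mul_of_nonneg_right (by linarith) (mul_nonneg hαpos.le hσ₀pos.le)
        calc (1 - m) * σ₀ * α k = (1 - m) * (α k * σ₀) := by ring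
          _ ≤ (1 - β k) * (α k * σ₀) := this
          _ = t k := rfl
      have h2 : ∑ i ∈ Finset.Ico N₀ n, t i ≤ ∑ i ∈ Finset.range n, t i := by
        rw [Finset.sum_Ico_eq_sub _ hn]
        have : (0:ℝ) ≤ ∑ i ∈ Finset.range N₀, t i :=
          Finset.sum_nonneg fun k _ => ht0 k
        linarith
      have h3 : (∑ i ∈ Finset.range n, α i) - ∑ i ∈ Finset.range N₀, α i
          = ∑ i ∈ Finset.Ico N₀ n, α i := (Finset.sum_Ico_eq_sub _ hn).symm
      rw [h3, Finset.mul_sum]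
      linarith
    apply tendsto_atTop_mono' _ (eventually_atTop.mpr ⟨N₀, hbound⟩)
    exact (tendsto_atTop_add_const_right _ _ hαsum).const_mul_atTop hconst
  -- conclude via the Xu-type lemma
  apply hpa_aux_xu (fun n => ‖y n - x n‖) t (fun n => norm_nonneg _) ht0 ht1 htsum
  intro ε hε
  rcases he with hsumm | hquot
  · -- summable errors
    set S : ℕ → ℝ := fun n => ∑ i ∈ Finset.range n, ‖e i‖ with hSdef
    have hSmono : ∀ p q, p ≤ q → S p ≤ S q := by
      intro p q hpq
      apply Finset.sum_le_sum_of_subset_of_nonneg (Finset.range_subset_range.mpr hpq)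
      intro k _ _; exact norm_nonneg _
    have hSL : Tendsto S atTop (nhds (∑' i, ‖e i‖)) := hsumm.hasSum.tendsto_sum_nat
    have hSle : ∀ p, S p ≤ ∑' i, ‖e i‖ := fun p =>
      Summable.sum_le_tsum (Finset.range p) (fun k _ => norm_nonneg _) hsumm
    obtain ⟨N₁, hN₁⟩ := (Metric.tendsto_atTop.mp hSL) ε hε
    refine ⟨N₁, fun n hn => ?_⟩
    have hind := hpa_aux_ind (fun n => ‖y n - x n‖) t (fun k => (1 - β k) * ‖e k‖)
      ht0 ht1 (fun k => mul_nonneg (by linarith [(hβ k).2]) (norm_nonneg _)) N₁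
      (fun k _ => hrec k) n hn
    have htail : ∑ k ∈ Finset.Ico N₁ n, (1 - β k) * ‖e k‖ ≤ ε := by
      have h1 : ∑ k ∈ Finset.Ico N₁ n, (1 - β k) * ‖e k‖
          ≤ ∑ k ∈ Finset.Ico N₁ n, ‖e k‖ := by
        apply Finset.sum_le_sum
        intro k _
        nlinarith [(hβ k).1, norm_nonneg (e k)]
      have h2 : ∑ k ∈ Finset.Ico N₁ n, ‖e k‖ = S n - S N₁ :=
        Finset.sum_Ico_eq_sub _ hn
      have h3 := hN₁ N₁ le_rfl
      rw [Real.dist_eq] at h3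
      have h4 : ∑' i, ‖e i‖ - S N₁ < ε := lt_of_abs_lt (by rwa [abs_sub_comm] at h3)
      have h5 := hSle n
      linarith
    linarith
  · -- vanishing relative errors
    have hσε : 0 < σ₀ * ε := mul_pos hσ₀pos hε
    obtain ⟨N₁, hN₁⟩ := (Metric.tendsto_atTop.mp hquot) (σ₀ * ε) hσε
    refine ⟨N₁, fun n hn => ?_⟩
    refine hpa_aux_ind2 (fun n => ‖y n - x n‖) t ht0 ht1 ε hε.le N₁ ?_ n hn
    intro k hk
    have h1 := hrec k
    have h2 := hN₁ k hk
    rw [Real.dist_eq, sub_zero, abs_of_nonneg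
      (div_nonneg (norm_nonneg _) (hα k).1.le)] at h2
    have h3 : ‖e k‖ < α k * (σ₀ * ε) := by
      rw [div_lt_iff₀ (hα k).1] at h2
      linarith [h2]
    have h4 : (1 - β k) * ‖e k‖ ≤ t k * ε := by
      have h5 : (1 - β k) * ‖e k‖ ≤ (1 - β k) * (α k * (σ₀ * ε)) :=
        mul_le_mul_of_nonneg_left h3.le (by linarith [(hβ k).2])
      calc (1 - β k) * ‖e k‖ ≤ (1 - β k) * (α k * (σ₀ * ε)) := h5
        _ = (1 - β k) * (α k * σ₀) * ε := by ring
        _ = t k * ε := rfl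
    linarith
end

section
/- Let δ₀ ∈ (0, δ₀*) where δ₀* = 2(η − α)/κ², and set σ₀ = η − α − κ²δ₀/2. Let {α_n} ⊆ (0, δ₀] and {β_n} ⊆ [0,1]. Let q ∈ Q be a fixed point of T, let y_0 ∈ Q, and define y_{n+1} = β_n y_n + (1 − β_n) P_Q(α_n f(y_n) + (T y_n − α_n F(T y_n))). Then for every n ≥ 0, ‖y_n − q‖ ≤ max{‖y_0 − q‖, ‖f(q) − F(q)‖/σ₀}; in particular the sequence {y_n} is bounded. -/
open scoped RealInnerProductSpace
open Filter

set_option maxHeartbeats 1000000 in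
/-- The unperturbed sequence `{y_n}` of the algorithm (HPA) satisfies
`‖y_n - q‖ ≤ max {‖y_0 - q‖, ‖f(q) - F(q)‖ / σ₀}` for every fixed point `q` of `T`;
in particular it is bounded. -/
theorem hpa_sequence_bounded
    {H : Type*} [NormedAddCommGroup H] [InnerProductSpace ℝ H] [CompleteSpace H]
    (Q : Set H) (hQne : Q.Nonempty) (hQclosed : IsClosed Q) (hQconvex : Convex ℝ Q)
    (T f F : H → H)
    (hTmaps : ∀ x ∈ Q, T x ∈ Q)
    (hTnonexp : ∀ x ∈ Q, ∀ y ∈ Q, ‖T x - T y‖ ≤ ‖x - y‖)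
    (αf : ℝ) (hαf : 0 ≤ αf)
    (hfLip : ∀ x ∈ Q, ∀ y ∈ Q, ‖f x - f y‖ ≤ αf * ‖x - y‖)
    (κ η : ℝ) (hκ : 0 < κ) (hη : 0 < η)
    (hFLip : ∀ x ∈ Q, ∀ y ∈ Q, ‖F x - F y‖ ≤ κ * ‖x - y‖)
    (hFmono : ∀ x ∈ Q, ∀ y ∈ Q, η * ‖x - y‖ ^ 2 ≤ ⟪F x - F y, x - y⟫)
    (hαη : αf < η)
    (PQ : H → H)
    (hPQ : ∀ x : H, PQ x ∈ Q ∧ ∀ y ∈ Q, ⟪x - PQ x, y - PQ x⟫ ≤ 0)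
    (δ₀ : ℝ) (hδ₀ : δ₀ ∈ Set.Ioo 0 (2 * (η - αf) / κ ^ 2))
    (σ₀ : ℝ) (hσ₀ : σ₀ = η - αf - κ ^ 2 * δ₀ / 2)
    (α β : ℕ → ℝ)
    (hα : ∀ n, α n ∈ Set.Ioc 0 δ₀)
    (hβ : ∀ n, β n ∈ Set.Icc (0 : ℝ) 1)
    (q : H) (hqQ : q ∈ Q) (hq : T q = q)
    (y : ℕ → H) (hy0 : y 0 ∈ Q)
    (hyrec : ∀ n, y (n + 1) = β n • y n
      + (1 - β n) • PQ (α n • f (y n) + (T (y n) - α n • F (T (y n))))) :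
    ∀ n, ‖y n - q‖ ≤ max ‖y 0 - q‖ (‖f q - F q‖ / σ₀) := by

  obtain ⟨hδpos, hδlt⟩ := hδ₀
  have hκ2 : (0:ℝ) < κ ^ 2 := by positivity
  have hσpos : 0 < σ₀ := by
    have h1 : κ ^ 2 * δ₀ < κ ^ 2 * (2 * (η - αf) / κ ^ 2) :=
      mul_lt_mul_of_pos_left hδlt hκ2
    have h2 : κ ^ 2 * (2 * (η - αf) / κ ^ 2) = 2 * (η - αf) := by
      field_simp
    rw [hσ₀]; nlinarith
  set M := max ‖y 0 - q‖ (‖f q - F q‖ / σ₀) with hMdef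
  have hMnonneg : 0 ≤ M := le_trans (norm_nonneg _) (le_max_left _ _)
  have hMf : ‖f q - F q‖ ≤ σ₀ * M := by
    have h1 : ‖f q - F q‖ / σ₀ ≤ M := le_max_right _ _
    calc ‖f q - F q‖ = σ₀ * (‖f q - F q‖ / σ₀) := by field_simp
      _ ≤ σ₀ * M := mul_le_mul_of_nonneg_left h1 hσpos.le
  have hyQ : ∀ n, y n ∈ Q := by
    intro n
    induction n with
    | zero => exact hy0
    | succ n ih =>
      rw [hyrec n]
      exact hQconvex ih (hPQ _).1 (hβ n).1 (by linarith [(hβ n).2]) (by ring)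
  have hproj : ∀ x : H, ‖PQ x - q‖ ≤ ‖x - q‖ := by
    intro x
    have h1 : ⟪x - PQ x, q - PQ x⟫ ≤ 0 := (hPQ x).2 q hqQ
    have hdecomp : x - q = (x - PQ x) + (PQ x - q) := by abel
    have h2 : ⟪x - q, PQ x - q⟫ = ⟪x - PQ x, PQ x - q⟫ + ⟪PQ x - q, PQ x - q⟫ := by
      rw [hdecomp, inner_add_left]
    have h3 : ⟪x - PQ x, PQ x - q⟫ = - ⟪x - PQ x, q - PQ x⟫ := by
      rw [← inner_neg_right]; congr 1; abel
    have h4 : ⟪PQ x - q, PQ x - q⟫ = ‖PQ x - q‖ ^ 2 := real_inner_self_eq_norm_sq _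
    have h5 : ⟪x - q, PQ x - q⟫ ≤ ‖x - q‖ * ‖PQ x - q‖ := real_inner_le_norm _ _
    have h6 : ‖PQ x - q‖ ^ 2 ≤ ‖x - q‖ * ‖PQ x - q‖ := by
      linarith [h1, h2, h3, h4, h5]
    rcases eq_or_lt_of_le (norm_nonneg (PQ x - q)) with h0 | h0
    · linarith [norm_nonneg (x - q)]
    · nlinarith
  by_cases hsing : ∀ u ∈ Q, ∀ v ∈ Q, u = v
  · intro n
    have h := hsing _ (hyQ n) _ hqQ
    rw [h]
    simpa using hMnonneg
  · push_neg at hsing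
    obtain ⟨u₀, hu₀, v₀, hv₀, huv⟩ := hsing
    have hd0 : 0 < ‖u₀ - v₀‖ := by
      rw [norm_pos_iff, sub_ne_zero]; exact huv
    have hηκ : η ≤ κ := by
      have h1 := hFmono u₀ hu₀ v₀ hv₀
      have h2 := real_inner_le_norm (F u₀ - F v₀) (u₀ - v₀)
      have h3 := hFLip u₀ hu₀ v₀ hv₀
      nlinarith [mul_le_mul_of_nonneg_right h3 (norm_nonneg (u₀ - v₀)), mul_pos hd0 hd0]
    intro n
    induction n with
    | zero => exact le_max_left _ _
    | succ n ih =>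
      set a := α n with ha
      obtain ⟨hapos, hale⟩ := hα n
      set u := T (y n) with hudef
      have huQ : u ∈ Q := hTmaps _ (hyQ n)
      have hTd : ‖u - q‖ ≤ ‖y n - q‖ := by
        have h := hTnonexp (y n) (hyQ n) q hqQ
        rwa [hq] at h
      have ht'half : a * (σ₀ + αf) ≤ 1 / 2 := by
        rw [hσ₀]
        nlinarith [sq_nonneg (1 - a * κ), mul_nonneg (mul_nonneg (sub_nonneg.mpr hale) hκ2.le) hapos.le, mul_pos hapos (lt_of_lt_of_le hη hηκ)]
      set c := 1 - a * (σ₀ + αf) with hc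
      have hcpos : 0 ≤ c := by
        rw [hc]; linarith
      have hw : ‖(u - q) - a • (F u - F q)‖ ≤ c * ‖u - q‖ := by
        have hmono := hFmono u huQ q hqQ
        have hlip := hFLip u huQ q hqQ
        have hΔF2 : ‖F u - F q‖ ^ 2 ≤ (κ * ‖u - q‖) ^ 2 := by
          have := pow_le_pow_left₀ (norm_nonneg _) hlip 2
          simpa using this
        have hexp : ‖(u - q) - a • (F u - F q)‖ ^ 2
            = ‖u - q‖ ^ 2 - 2 * a * ⟪F u - F q, u - q⟫ + a ^ 2 * ‖F u - F q‖ ^ 2 := by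
          rw [norm_sub_sq_real, real_inner_smul_right, norm_smul,
            real_inner_comm (u - q) (F u - F q)]
          rw [Real.norm_eq_abs, abs_of_pos hapos]
          ring
        have h2 : ‖(u - q) - a • (F u - F q)‖ ^ 2 ≤ (c * ‖u - q‖) ^ 2 := by
          rw [hexp, hc, hσ₀]
          have e1 : 2 * a * (η * ‖u - q‖ ^ 2) ≤ 2 * a * ⟪F u - F q, u - q⟫ :=
            mul_le_mul_of_nonneg_left hmono (by linarith)
          have e2 : a ^ 2 * ‖F u - F q‖ ^ 2 ≤ a ^ 2 * (κ * ‖u - q‖) ^ 2 :=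
            mul_le_mul_of_nonneg_left hΔF2 (sq_nonneg a)
          have e3 : 0 ≤ (δ₀ - a) * a * (κ ^ 2 * ‖u - q‖ ^ 2) :=
            mul_nonneg (mul_nonneg (by linarith) hapos.le)
              (mul_nonneg hκ2.le (sq_nonneg _))
          have e4 : 0 ≤ (a * (η - κ ^ 2 * δ₀ / 2)) ^ 2 * ‖u - q‖ ^ 2 :=
            mul_nonneg (sq_nonneg _) (sq_nonneg _)
          nlinarith [e1, e2, e3, e4]
        have hB : 0 ≤ c * ‖u - q‖ := mul_nonneg hcpos (norm_nonneg _)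
        nlinarith [norm_nonneg ((u - q) - a • (F u - F q))]
      set x := a • f (y n) + (u - a • F u) with hxdef
      have hx : ‖x - q‖ ≤ (1 - a * σ₀) * ‖y n - q‖ + a * ‖f q - F q‖ := by
        have hfl := hfLip (y n) (hyQ n) q hqQ
        have decomp : x - q
            = a • (f (y n) - f q) + a • (f q - F q) + ((u - q) - a • (F u - F q)) := by
          rw [hxdef]
          simp only [smul_sub]
          abel
        rw [decomp]
        have t1 : ‖a • (f (y n) - f q) + a • (f q - F q) + ((u - q) - a • (F u - F q))‖
            ≤ ‖a • (f (y n) - f q)‖ + ‖a • (f q - F q)‖ + ‖(u - q) - a • (F u - F q)‖ :=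
          norm_add₃_le
        have t2 : ‖a • (f (y n) - f q)‖ ≤ a * (αf * ‖y n - q‖) := by
          rw [norm_smul, Real.norm_eq_abs, abs_of_pos hapos]
          exact mul_le_mul_of_nonneg_left hfl hapos.le
        have t3 : ‖a • (f q - F q)‖ = a * ‖f q - F q‖ := by
          rw [norm_smul, Real.norm_eq_abs, abs_of_pos hapos]
        have t4 : c * ‖u - q‖ ≤ c * ‖y n - q‖ := mul_le_mul_of_nonneg_left hTd hcpos
        have : (1 - a * σ₀) * ‖y n - q‖ = a * (αf * ‖y n - q‖) + c * ‖y n - q‖ := by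
          rw [hc]; ring
        linarith
      have haσ : a * σ₀ ≤ 1 := by nlinarith [mul_nonneg hapos.le hαf]
      have hxM : ‖x - q‖ ≤ M := by
        have h1 : (1 - a * σ₀) * ‖y n - q‖ ≤ (1 - a * σ₀) * M :=
          mul_le_mul_of_nonneg_left ih (by linarith)
        have h2 : a * ‖f q - F q‖ ≤ a * (σ₀ * M) :=
          mul_le_mul_of_nonneg_left hMf hapos.le
        calc ‖x - q‖ ≤ (1 - a * σ₀) * ‖y n - q‖ + a * ‖f q - F q‖ := hx
          _ ≤ (1 - a * σ₀) * M + a * (σ₀ * M) := by linarith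
          _ = M := by ring
      have hPxM : ‖PQ x - q‖ ≤ M := le_trans (hproj x) hxM
      obtain ⟨hb0, hb1⟩ := hβ n
      have hrec : y (n + 1) - q = β n • (y n - q) + (1 - β n) • (PQ x - q) := by
        rw [hyrec n, hxdef, hudef]
        simp only [smul_sub, sub_smul, one_smul]
        abel
      calc ‖y (n + 1) - q‖ = ‖β n • (y n - q) + (1 - β n) • (PQ x - q)‖ := by rw [hrec]
        _ ≤ ‖β n • (y n - q)‖ + ‖(1 - β n) • (PQ x - q)‖ := norm_add_le _ _
        _ = β n * ‖y n - q‖ + (1 - β n) * ‖PQ x - q‖ := by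
            rw [norm_smul, norm_smul, Real.norm_eq_abs, Real.norm_eq_abs,
              abs_of_nonneg hb0, abs_of_nonneg (by linarith : (0:ℝ) ≤ 1 - β n)]
        _ ≤ β n * M + (1 - β n) * M := by
            have := mul_le_mul_of_nonneg_left ih hb0
            have := mul_le_mul_of_nonneg_left hPxM (by linarith : (0:ℝ) ≤ 1 - β n)
            linarith
        _ = M := by ring
end

section
/- Let δ₀ ∈ (0, δ₀*) where δ₀* = 2(η − α)/κ². Let {α_n} ⊆ (0, δ₀] with α_n → 0, and let {β_n} ⊆ [0,1] with 0 < liminf β_n ≤ limsup β_n < 1. Let y_0 ∈ Q and define y_{n+1} = β_n y_n + (1 − β_n) P_Q(α_n f(y_n) + (T y_n − α_n F(T y_n))). Then ‖y_n − T y_n‖ → 0. -/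
/-!
Fix `p ∈ Fix T` and put `θ = η - δ₀κ²/2 - α > 0`. On `Q` the map `I - aF` (`0 < a ≤ δ₀`) is
a contraction with factor `1 - a(η - δ₀κ²/2)`, so the point
`z_n = P_Q(α_n f(y_n) + (I - α_n F)(T y_n))` satisfies
`‖z_n - p‖ ≤ (1 - α_n θ)‖y_n - p‖ + α_n ‖f p - F p‖`. Hence `(y_n)` and `(z_n)` are bounded and
`‖z_n - T y_n‖ = O(α_n) → 0`.

Since `y_{n+1} = β_n y_n + (1 - β_n) z_n`, the identity for `‖β u + (1 - β) v‖²` gives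
`β_n(1 - β_n)‖y_n - z_n‖² ≤ ‖y_n - p‖² - ‖y_{n+1} - p‖² + o(1)`, and nonexpansiveness of `T` gives
`‖y_{n+1} - z_{n+1}‖ ≤ ‖y_n - z_n‖ + o(1)`. As `β_n(1 - β_n)` is eventually bounded below,
summing the first inequality over a window of length `k` and using the second to compare the last
term of the window with the others bounds `‖y_n - z_n‖²` by `O(1/k) + o(1)`. So
`‖y_n - z_n‖ → 0`, and with it `‖y_n - T y_n‖ → 0`.
-/

open scoped RealInnerProductSpace Topology
open Filter

section RealSequences

open Finset

variable {u a e ε : ℕ → ℝ}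

lemma le_add_mul_of_le_add {c : ℝ} {m : ℕ} (hslow : ∀ j ≥ m, u (j + 1) ≤ u j + ε j)
    (hε : ∀ j ≥ m, ε j ≤ c) (i : ℕ) : u (m + i) ≤ u m + i * c := by
  induction i with
  | zero => simp
  | succ i ih =>
    have h₁ := hslow (m + i) (by omega)
    have h₂ := hε (m + i) (by omega)
    push_cast
    rw [← add_assoc]
    linarith

lemma mul_le_of_le_sub_add_of_le_add {B E c : ℝ} {n k : ℕ} (hc : 0 ≤ c)
    (ha₀ : ∀ j, 0 ≤ a j) (haB : ∀ j, a j ≤ B)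
    (hdesc : ∀ j ≥ n, u j ≤ a j - a (j + 1) + e j) (he : ∀ j ≥ n, e j ≤ E)
    (hslow : ∀ j ≥ n, u (j + 1) ≤ u j + ε j) (hε : ∀ j ≥ n, ε j ≤ c) :
    k * u (n + k) ≤ B + k * E + k ^ 2 * c := by
  have hlast : ∀ j ∈ range k, u (n + k) ≤ u (n + j) + k * c := by
    intro j hj
    have hjk := (mem_range.1 hj).le
    have h := le_add_mul_of_le_add (m := n + j) (fun i hi => hslow i (by omega))
      (fun i hi => hε i (by omega)) (k - j)
    rw [show n + j + (k - j) = n + k by omega] at h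
    have : ((k - j : ℕ) : ℝ) * c ≤ k * c := by gcongr; exact_mod_cast Nat.sub_le k j
    linarith
  have htelescope : ∑ j ∈ range k, u (n + j) ≤ a n - a (n + k) + k * E :=
    calc ∑ j ∈ range k, u (n + j)
        ≤ ∑ j ∈ range k, ((a (n + j) - a (n + (j + 1))) + E) :=
          sum_le_sum fun j _ => (hdesc (n + j) (by omega)).trans <| by
            rw [← add_assoc]; gcongr; exact he (n + j) (by omega)
      _ = a n - a (n + k) + k * E := by
          rw [sum_add_distrib, sum_range_sub' (fun j => a (n + j))]; simp
  calc (k : ℝ) * u (n + k) = ∑ j ∈ range k, u (n + k) := by simp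
    _ ≤ ∑ j ∈ range k, (u (n + j) + k * c) := sum_le_sum hlast
    _ ≤ B + k * E + k ^ 2 * c := by
      rw [sum_add_distrib]; simp only [sum_const, card_range, nsmul_eq_mul]
      linarith [ha₀ (n + k), haB n]

theorem tendsto_zero_of_le_sub_add_of_le_add {B : ℝ} (hu : ∀ n, 0 ≤ u n)
    (ha₀ : ∀ n, 0 ≤ a n) (haB : ∀ n, a n ≤ B)
    (hdesc : ∀ᶠ n in atTop, u n ≤ a n - a (n + 1) + e n) (he : Tendsto e atTop (𝓝 0))
    (hslow : ∀ᶠ n in atTop, u (n + 1) ≤ u n + ε n) (hε : Tendsto ε atTop (𝓝 0)) :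
    Tendsto u atTop (𝓝 0) := by
  refine tendsto_order.2 ⟨fun r hr => .of_forall fun n => hr.trans_le (hu n), fun r hr => ?_⟩
  obtain ⟨k, hk⟩ := exists_nat_gt (3 * B / r)
  have hk₀ : (0 : ℝ) < k := lt_of_le_of_lt (by have := (ha₀ 0).trans (haB 0); positivity) hk
  have hBk : B < k * r / 3 := by rw [div_lt_iff₀ hr] at hk; linarith
  obtain ⟨N, hN⟩ := eventually_atTop.1 <| hdesc.and <| hslow.and <|
    (he.eventually (ge_mem_nhds (by positivity : (0 : ℝ) < r / 3))).and
    (hε.eventually (ge_mem_nhds (by positivity : (0 : ℝ) < r / (3 * k))))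
  refine eventually_atTop.2 ⟨N + k, fun m hm => ?_⟩
  obtain ⟨n, rfl⟩ : ∃ n, m = n + k := ⟨m - k, by omega⟩
  have hwindow := mul_le_of_le_sub_add_of_le_add (n := n) (k := k) (by positivity) ha₀ haB
    (fun j hj => (hN j (by omega)).1) (fun j hj => (hN j (by omega)).2.2.1)
    (fun j hj => (hN j (by omega)).2.1) (fun j hj => (hN j (by omega)).2.2.2)
  have hk2 : (k : ℝ) ^ 2 * (r / (3 * k)) = k * r / 3 := by field_simp
  refine lt_of_mul_lt_mul_left (a := (k : ℝ)) ?_ hk₀.le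
  linarith

lemma exists_pos_eventually_le_mul_one_sub {ι : Type*} {l : Filter ι} {β : ι → ℝ}
    (hβ : ∀ i, β i ∈ Set.Icc (0 : ℝ) 1) (hliminf : 0 < liminf β l) (hlimsup : limsup β l < 1) :
    ∃ γ > 0, ∀ᶠ i in l, γ ≤ β i * (1 - β i) := by
  obtain ⟨a, ha₀, ha⟩ := exists_between hliminf
  obtain ⟨b, hb, hb₁⟩ := exists_between hlimsup
  refine ⟨a * (1 - b), mul_pos ha₀ (sub_pos.2 hb₁), ?_⟩
  filter_upwards [eventually_lt_of_lt_liminf ha (isBoundedUnder_of ⟨0, fun i => (hβ i).1⟩),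
    eventually_lt_of_limsup_lt hb (isBoundedUnder_of ⟨1, fun i => (hβ i).2⟩)] with i hai hbi
  exact mul_le_mul hai.le (by linarith) (sub_nonneg.2 hb₁.le) (hβ i).1

end RealSequences

section InnerProductSpace

variable {H : Type*} [NormedAddCommGroup H] [InnerProductSpace ℝ H]

lemma norm_smul_add_one_sub_smul_sq (b : ℝ) (x y : H) :
    ‖b • x + (1 - b) • y‖ ^ 2
      = b * ‖x‖ ^ 2 + (1 - b) * ‖y‖ ^ 2 - b * (1 - b) * ‖x - y‖ ^ 2 := by
  rw [norm_add_sq_real, norm_sub_sq_real, real_inner_smul_left, real_inner_smul_right,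
    norm_smul, norm_smul, mul_pow, mul_pow, Real.norm_eq_abs, Real.norm_eq_abs, sq_abs, sq_abs]
  ring

lemma norm_sub_le_of_inner_le_zero {x Px q : H} (h : ⟪x - Px, q - Px⟫ ≤ 0) :
    ‖Px - q‖ ≤ ‖x - q‖ := by
  have hsq := norm_sub_sq_real (x - Px) (q - Px)
  rw [sub_sub_sub_cancel_right, norm_sub_rev q] at hsq
  rw [← sq_le_sq₀ (norm_nonneg _) (norm_nonneg _)]
  nlinarith [norm_nonneg (x - Px)]

lemma le_of_strongly_monotone_of_lipschitz {F : H → H} {u v : H} {η κ : ℝ} (huv : u ≠ v)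
    (hmono : η * ‖u - v‖ ^ 2 ≤ ⟪F u - F v, u - v⟫) (hlip : ‖F u - F v‖ ≤ κ * ‖u - v‖) :
    η ≤ κ := by
  have hpos : 0 < ‖u - v‖ := norm_pos_iff.2 (sub_ne_zero.2 huv)
  have hCS := real_inner_le_norm (F u - F v) (u - v)
  have : η * ‖u - v‖ ^ 2 ≤ κ * ‖u - v‖ ^ 2 := by nlinarith
  exact le_of_mul_le_mul_right this (by positivity)

lemma mul_sub_sub_le_one {η κ δ L a : ℝ} (hηκ : η ≤ κ) (hL : 0 ≤ L) (ha : 0 ≤ a)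
    (haδ : a ≤ δ) : a * (η - δ * κ ^ 2 / 2 - L) ≤ 1 := by
  -- `a (η - δκ²/2) ≤ aκ - (aκ)²/2 ≤ 1/2`
  nlinarith [mul_nonneg (mul_nonneg ha (sub_nonneg.2 haδ)) (sq_nonneg κ), sq_nonneg (a * κ - 1),
    mul_le_mul_of_nonneg_left hηκ ha, mul_nonneg ha hL]

lemma norm_sub_smul_sub_le {F : H → H} {u v : H} {η κ δ a : ℝ}
    (hmono : η * ‖u - v‖ ^ 2 ≤ ⟪F u - F v, u - v⟫) (hlip : ‖F u - F v‖ ≤ κ * ‖u - v‖)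
    (ha : 0 ≤ a) (haδ : a ≤ δ) (hηκ : η ≤ κ) :
    ‖(u - a • F u) - (v - a • F v)‖ ≤ (1 - a * (η - δ * κ ^ 2 / 2)) * ‖u - v‖ := by
  have hrate : 0 ≤ 1 - a * (η - δ * κ ^ 2 / 2) := by
    simpa using mul_sub_sub_le_one hηκ le_rfl ha haδ
  have hexpand : ‖(u - a • F u) - (v - a • F v)‖ ^ 2
      = ‖u - v‖ ^ 2 - 2 * a * ⟪F u - F v, u - v⟫ + a ^ 2 * ‖F u - F v‖ ^ 2 := by
    rw [show (u - a • F u) - (v - a • F v) = (u - v) - a • (F u - F v) by module,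
      norm_sub_sq_real, real_inner_smul_right, norm_smul, Real.norm_eq_abs, mul_pow, sq_abs,
      real_inner_comm]
    ring
  have hlip_sq : ‖F u - F v‖ ^ 2 ≤ κ ^ 2 * ‖u - v‖ ^ 2 := by
    rw [← mul_pow]; exact pow_le_pow_left₀ (norm_nonneg _) hlip 2
  rw [← sq_le_sq₀ (norm_nonneg _) (mul_nonneg hrate (norm_nonneg _)), hexpand]
  nlinarith [mul_le_mul_of_nonneg_left hmono (by positivity : 0 ≤ 2 * a),
    mul_le_mul_of_nonneg_left hlip_sq (sq_nonneg a),
    mul_nonneg (mul_nonneg (mul_nonneg ha (sub_nonneg.2 haδ)) (sq_nonneg κ)) (sq_nonneg ‖u - v‖),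
    mul_nonneg (sq_nonneg (a * (η - δ * κ ^ 2 / 2))) (sq_nonneg ‖u - v‖)]

end InnerProductSpace

section Mann

variable {H : Type*} [NormedAddCommGroup H] [InnerProductSpace ℝ H]
  {y z : ℕ → H} {β : ℕ → ℝ} {p : H}

lemma Convex.mann_mem {Q : Set H} (hQ : Convex ℝ Q) (hy₀ : y 0 ∈ Q) (hzQ : ∀ n, z n ∈ Q)
    (hy : ∀ n, y (n + 1) = β n • y n + (1 - β n) • z n) (hβ : ∀ n, β n ∈ Set.Icc (0 : ℝ) 1)
    (n : ℕ) : y n ∈ Q := by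
  induction n with
  | zero => exact hy₀
  | succ n ih =>
    rw [hy n]
    exact hQ ih (hzQ n) (hβ n).1 (sub_nonneg.2 (hβ n).2) (add_sub_cancel _ _)

lemma norm_sub_le_max_of_mann {t : ℕ → ℝ} {C : ℝ}
    (hy : ∀ n, y (n + 1) = β n • y n + (1 - β n) • z n) (hβ : ∀ n, β n ∈ Set.Icc (0 : ℝ) 1)
    (ht : ∀ n, t n ∈ Set.Icc (0 : ℝ) 1)
    (hz : ∀ n, ‖z n - p‖ ≤ (1 - t n) * ‖y n - p‖ + t n * C) (n : ℕ) :
    ‖y n - p‖ ≤ max ‖y 0 - p‖ C ∧ ‖z n - p‖ ≤ max ‖y 0 - p‖ C := by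
  set M := max ‖y 0 - p‖ C
  have hzM : ∀ n, ‖y n - p‖ ≤ M → ‖z n - p‖ ≤ M := fun n hyM =>
    calc ‖z n - p‖ ≤ (1 - t n) * ‖y n - p‖ + t n * C := hz n
      _ ≤ (1 - t n) * M + t n * M :=
        add_le_add (mul_le_mul_of_nonneg_left hyM (sub_nonneg.2 (ht n).2))
          (mul_le_mul_of_nonneg_left (le_max_right _ _) (ht n).1)
      _ = M := by ring
  have hyM : ∀ n, y n ∈ Metric.closedBall p M := by
    intro n
    induction n with
    | zero => exact mem_closedBall_iff_norm.2 (le_max_left _ _)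
    | succ n ih =>
      rw [hy n]
      exact convex_closedBall p M ih
        (mem_closedBall_iff_norm.2 (hzM n (mem_closedBall_iff_norm.1 ih)))
        (hβ n).1 (sub_nonneg.2 (hβ n).2) (add_sub_cancel _ _)
  exact ⟨mem_closedBall_iff_norm.1 (hyM n), hzM n (mem_closedBall_iff_norm.1 (hyM n))⟩

theorem tendsto_norm_sub_of_mann {e ε : ℕ → ℝ} {M : ℝ}
    (hy : ∀ n, y (n + 1) = β n • y n + (1 - β n) • z n) (hβ : ∀ n, β n ∈ Set.Icc (0 : ℝ) 1)
    (hβliminf : 0 < liminf β atTop) (hβlimsup : limsup β atTop < 1)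
    (hyM : ∀ n, ‖y n - p‖ ≤ M) (hzM : ∀ n, ‖z n - p‖ ≤ M)
    (he₀ : ∀ n, 0 ≤ e n) (he : Tendsto e atTop (𝓝 0)) (hz : ∀ n, ‖z n - p‖ ≤ ‖y n - p‖ + e n)
    (hε₀ : ∀ n, 0 ≤ ε n) (hε : Tendsto ε atTop (𝓝 0))
    (hzz : ∀ n, ‖z (n + 1) - z n‖ ≤ ‖y (n + 1) - y n‖ + ε n) :
    Tendsto (fun n => ‖y n - z n‖) atTop (𝓝 0) := by
  obtain ⟨γ, hγ, hβγ⟩ := exists_pos_eventually_le_mul_one_sub hβ hβliminf hβlimsup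
  have hM : 0 ≤ M := (norm_nonneg _).trans (hyM 0)
  have hdM : ∀ n, ‖y n - z n‖ ≤ 2 * M := fun n =>
    (norm_sub_le_norm_sub_add_norm_sub _ p _).trans <| by
      rw [norm_sub_rev p]; linarith [hyM n, hzM n]
  have henergy : ∀ n, β n * (1 - β n) * ‖y n - z n‖ ^ 2
      ≤ ‖y n - p‖ ^ 2 - ‖y (n + 1) - p‖ ^ 2 + e n * (2 * M + e n) := by
    intro n
    have hz_sq : ‖z n - p‖ ^ 2 ≤ ‖y n - p‖ ^ 2 + e n * (2 * M + e n) := by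
      nlinarith [pow_le_pow_left₀ (norm_nonneg _) (hz n) 2, hyM n, he₀ n, norm_nonneg (y n - p)]
    rw [show y (n + 1) - p = β n • (y n - p) + (1 - β n) • (z n - p) by rw [hy n]; module,
      norm_smul_add_one_sub_smul_sq, sub_sub_sub_cancel_right]
    nlinarith [mul_le_mul_of_nonneg_left hz_sq (sub_nonneg.2 (hβ n).2),
      mul_nonneg (hβ n).1 (mul_nonneg (he₀ n) (by linarith [he₀ n] : 0 ≤ 2 * M + e n))]
  have hslow : ∀ n, ‖y (n + 1) - z (n + 1)‖ ≤ ‖y n - z n‖ + ε n := by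
    intro n
    have hyz : y (n + 1) - z n = β n • (y n - z n) := by rw [hy n]; module
    have hyy : y (n + 1) - y n = (1 - β n) • (z n - y n) := by rw [hy n]; module
    have hzz' := hzz n
    rw [hyy, norm_smul, Real.norm_of_nonneg (sub_nonneg.2 (hβ n).2), norm_sub_rev (z n)] at hzz'
    calc ‖y (n + 1) - z (n + 1)‖ ≤ ‖y (n + 1) - z n‖ + ‖z n - z (n + 1)‖ :=
          norm_sub_le_norm_sub_add_norm_sub _ _ _
      _ ≤ β n * ‖y n - z n‖ + ((1 - β n) * ‖y n - z n‖ + ε n) := by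
          rw [hyz, norm_smul, Real.norm_of_nonneg (hβ n).1, norm_sub_rev (z n)]; gcongr
      _ = ‖y n - z n‖ + ε n := by ring
  have hsq : Tendsto (fun n => ‖y n - z n‖ ^ 2) atTop (𝓝 0) := by
    refine tendsto_zero_of_le_sub_add_of_le_add (a := fun n => ‖y n - p‖ ^ 2 / γ)
      (B := M ^ 2 / γ) (e := fun n => e n * (2 * M + e n) / γ)
      (ε := fun n => ε n * (4 * M + ε n)) (fun n => by positivity) (fun n => by positivity)
      (fun n => by gcongr; exact hyM n) ?_ ?_ (.of_forall fun n => ?_) ?_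
    · filter_upwards [hβγ] with n hn
      rw [← sub_div, ← add_div, le_div_iff₀ hγ]
      nlinarith [henergy n, mul_le_mul_of_nonneg_right hn (sq_nonneg ‖y n - z n‖)]
    · simpa using (he.mul (tendsto_const_nhds.add he)).div_const γ
    · nlinarith [pow_le_pow_left₀ (norm_nonneg _) (hslow n) 2, hdM n, hε₀ n,
        norm_nonneg (y n - z n)]
    · simpa using hε.mul (tendsto_const_nhds.add hε)
  simpa [Real.sqrt_sq (norm_nonneg _)] using hsq.sqrt

theorem tendsto_norm_sub_apply_of_mann {Q : Set H} {T : H → H}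
    (hT : ∀ x ∈ Q, ∀ x' ∈ Q, ‖T x - T x'‖ ≤ ‖x - x'‖) (hyQ : ∀ n, y n ∈ Q) {e r : ℕ → ℝ} {M : ℝ}
    (hy : ∀ n, y (n + 1) = β n • y n + (1 - β n) • z n) (hβ : ∀ n, β n ∈ Set.Icc (0 : ℝ) 1)
    (hβliminf : 0 < liminf β atTop) (hβlimsup : limsup β atTop < 1)
    (hyM : ∀ n, ‖y n - p‖ ≤ M) (hzM : ∀ n, ‖z n - p‖ ≤ M)
    (he₀ : ∀ n, 0 ≤ e n) (he : Tendsto e atTop (𝓝 0)) (hz : ∀ n, ‖z n - p‖ ≤ ‖y n - p‖ + e n)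
    (hr : ∀ n, ‖z n - T (y n)‖ ≤ r n) (hr₀ : Tendsto r atTop (𝓝 0)) :
    Tendsto (fun n => ‖y n - T (y n)‖) atTop (𝓝 0) := by
  have hzz : ∀ n, ‖z (n + 1) - z n‖ ≤ ‖y (n + 1) - y n‖ + (r (n + 1) + r n) := by
    intro n
    calc ‖z (n + 1) - z n‖
        ≤ ‖z (n + 1) - T (y (n + 1))‖ + ‖T (y (n + 1)) - T (y n)‖ + ‖z n - T (y n)‖ := by
          rw [norm_sub_rev (z n)]
          exact (norm_sub_le_norm_sub_add_norm_sub _ (T (y n)) _).trans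
            (add_le_add_left (norm_sub_le_norm_sub_add_norm_sub _ _ _) _)
      _ ≤ ‖y (n + 1) - y n‖ + (r (n + 1) + r n) := by
          linarith [hr n, hr (n + 1), hT _ (hyQ (n + 1)) _ (hyQ n)]
  have hyz := tendsto_norm_sub_of_mann hy hβ hβliminf hβlimsup hyM hzM he₀ he hz
    (fun n => add_nonneg ((norm_nonneg _).trans (hr (n + 1))) ((norm_nonneg _).trans (hr n)))
    (by simpa using (hr₀.comp (tendsto_add_atTop_nat 1)).add hr₀) hzz
  exact squeeze_zero (fun n => norm_nonneg _)
    (fun n => (norm_sub_le_norm_sub_add_norm_sub _ (z n) _).trans (add_le_add le_rfl (hr n)))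
    (by simpa using hyz.add hr₀)

end Mann

section HybridSteepestDescent

variable {H : Type*} [NormedAddCommGroup H] [InnerProductSpace ℝ H]

/-- The point that (HPA) projects onto `Q`:
`y_{n+1} = β_n y_n + (1 - β_n) P_Q (hpaPoint T f F α_n y_n)`. -/
def hpaPoint (T f F : H → H) (a : ℝ) (x : H) : H := a • f x + (T x - a • F (T x))

variable {T f F : H → H} {x p : H} {a L κ : ℝ}

lemma norm_hpaPoint_sub_fixedPoint_le {η δ : ℝ} (hTp : T p = p) (hT : ‖T x - T p‖ ≤ ‖x - p‖)
    (hf : ‖f x - f p‖ ≤ L * ‖x - p‖)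
    (hmono : η * ‖T x - p‖ ^ 2 ≤ ⟪F (T x) - F p, T x - p⟫)
    (hlip : ‖F (T x) - F p‖ ≤ κ * ‖T x - p‖) (ha : 0 ≤ a) (haδ : a ≤ δ) (hηκ : η ≤ κ) :
    ‖hpaPoint T f F a x - p‖
      ≤ (1 - a * (η - δ * κ ^ 2 / 2 - L)) * ‖x - p‖ + a * ‖f p - F p‖ := by
  rw [hTp] at hT
  have hcontr := (norm_sub_smul_sub_le hmono hlip ha haδ hηκ).trans
    (mul_le_mul_of_nonneg_left hT (by simpa using mul_sub_sub_le_one hηκ le_rfl ha haδ))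
  calc ‖hpaPoint T f F a x - p‖
      = ‖a • (f x - f p) + a • (f p - F p) + ((T x - a • F (T x)) - (p - a • F p))‖ := by
        unfold hpaPoint; congr 1; module
    _ ≤ a * (L * ‖x - p‖) + a * ‖f p - F p‖
          + (1 - a * (η - δ * κ ^ 2 / 2)) * ‖x - p‖ := by
        refine norm_add₃_le.trans (add_le_add (add_le_add ?_ ?_) hcontr) <;>
          rw [norm_smul, Real.norm_of_nonneg ha]
        exact mul_le_mul_of_nonneg_left hf ha
    _ = (1 - a * (η - δ * κ ^ 2 / 2 - L)) * ‖x - p‖ + a * ‖f p - F p‖ := by ring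

lemma norm_hpaPoint_sub_apply_le (hTp : T p = p) (hT : ‖T x - T p‖ ≤ ‖x - p‖)
    (hf : ‖f x - f p‖ ≤ L * ‖x - p‖) (hlip : ‖F (T x) - F p‖ ≤ κ * ‖T x - p‖) (hκ : 0 ≤ κ)
    (ha : 0 ≤ a) :
    ‖hpaPoint T f F a x - T x‖ ≤ a * ((L + κ) * ‖x - p‖ + ‖f p - F p‖) := by
  rw [hTp] at hT
  have hF : ‖F (T x) - F p‖ ≤ κ * ‖x - p‖ := hlip.trans (mul_le_mul_of_nonneg_left hT hκ)
  calc ‖hpaPoint T f F a x - T x‖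
      = ‖a • ((f x - f p) + (f p - F p) - (F (T x) - F p))‖ := by
        unfold hpaPoint; congr 1; module
    _ = a * ‖(f x - f p) + (f p - F p) - (F (T x) - F p)‖ := by
        rw [norm_smul, Real.norm_of_nonneg ha]
    _ ≤ a * ((L + κ) * ‖x - p‖ + ‖f p - F p‖) := by
        gcongr
        exact (norm_sub_le _ _).trans (by linarith [norm_add_le (f x - f p) (f p - F p)])

end HybridSteepestDescent

theorem hpa_asymptotic_fixed_point_h1_general
    {H : Type*} [NormedAddCommGroup H] [InnerProductSpace ℝ H]
    (Q : Set H) (hQconvex : Convex ℝ Q)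
    (T f F : H → H)
    (hTmaps : ∀ x ∈ Q, T x ∈ Q)
    (hTnonexp : ∀ x ∈ Q, ∀ y ∈ Q, ‖T x - T y‖ ≤ ‖x - y‖)
    (hfix : ∃ p ∈ Q, T p = p)
    (αf : ℝ) (hαf : 0 ≤ αf)
    (hfLip : ∀ x ∈ Q, ∀ y ∈ Q, ‖f x - f y‖ ≤ αf * ‖x - y‖)
    (κ η : ℝ) (hκ : 0 < κ)
    (hFLip : ∀ x ∈ Q, ∀ y ∈ Q, ‖F x - F y‖ ≤ κ * ‖x - y‖)
    (hFmono : ∀ x ∈ Q, ∀ y ∈ Q, η * ‖x - y‖ ^ 2 ≤ ⟪F x - F y, x - y⟫)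
    (PQ : H → H)
    (hPQ : ∀ x : H, PQ x ∈ Q ∧ ∀ y ∈ Q, ⟪x - PQ x, y - PQ x⟫ ≤ 0)
    (δ₀ : ℝ) (hδ₀ : δ₀ ∈ Set.Ioo 0 (2 * (η - αf) / κ ^ 2))
    (α β : ℕ → ℝ)
    (hα : ∀ n, α n ∈ Set.Ioc 0 δ₀)
    (hα0 : Tendsto α atTop (nhds 0))
    (hβ : ∀ n, β n ∈ Set.Icc (0 : ℝ) 1)
    (hβliminf : 0 < liminf β atTop)
    (hβlimsup : limsup β atTop < 1)
    (y : ℕ → H) (hy0 : y 0 ∈ Q)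
    (hyrec : ∀ n, y (n + 1) = β n • y n
      + (1 - β n) • PQ (α n • f (y n) + (T (y n) - α n • F (T (y n))))) :
    Tendsto (fun n => ‖y n - T (y n)‖) atTop (nhds 0) := by
  obtain ⟨p, hpQ, hTp⟩ := hfix
  have hyQ : ∀ n, y n ∈ Q := hQconvex.mann_mem hy0 (fun n => (hPQ _).1) hyrec hβ
  -- `η ≤ κ`, which keeps the contraction factor of `I - α_n F` nonnegative, needs two points
  -- of `Q`.
  rcases Q.subsingleton_or_nontrivial with hQ | ⟨x₀, hx₀, x₁, hx₁, hne⟩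
  · simp [sub_eq_zero.2 (hQ (hyQ _) (hTmaps _ (hyQ _)))]
  have hηκ : η ≤ κ :=
    le_of_strongly_monotone_of_lipschitz hne (hFmono x₀ hx₀ x₁ hx₁) (hFLip x₀ hx₀ x₁ hx₁)
  set θ := η - δ₀ * κ ^ 2 / 2 - αf with hθ_def
  have hθ : 0 < θ := by linarith [(lt_div_iff₀ (by positivity : (0 : ℝ) < κ ^ 2)).1 hδ₀.2]
  set C := ‖f p - F p‖
  have hproj : ∀ x, ∀ q ∈ Q, ‖PQ x - q‖ ≤ ‖x - q‖ := fun x q hq =>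
    norm_sub_le_of_inner_le_zero ((hPQ x).2 q hq)
  have hstep : ∀ n,
      ‖PQ (hpaPoint T f F (α n) (y n)) - p‖ ≤ (1 - α n * θ) * ‖y n - p‖ + α n * C := fun n =>
    (hproj _ p hpQ).trans <| norm_hpaPoint_sub_fixedPoint_le hTp (hTnonexp _ (hyQ n) _ hpQ)
      (hfLip _ (hyQ n) _ hpQ) (hFmono _ (hTmaps _ (hyQ n)) _ hpQ)
      (hFLip _ (hTmaps _ (hyQ n)) _ hpQ) (hα n).1.le (hα n).2 hηκ
  have hbdd := norm_sub_le_max_of_mann (p := p) (t := fun n => α n * θ) (C := C / θ) hyrec hβ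
    (fun n => ⟨mul_nonneg (hα n).1.le hθ.le, mul_sub_sub_le_one hηκ hαf (hα n).1.le (hα n).2⟩)
    (fun n => by rw [mul_assoc, mul_div_cancel₀ _ hθ.ne']; exact hstep n)
  set M := max ‖y 0 - p‖ (C / θ)
  have hfejer : ∀ n, ‖PQ (hpaPoint T f F (α n) (y n)) - p‖ ≤ ‖y n - p‖ + α n * C := fun n =>
    (hstep n).trans <| by
      nlinarith [mul_nonneg (mul_nonneg (hα n).1.le hθ.le) (norm_nonneg (y n - p))]
  have hclose : ∀ n, ‖PQ (hpaPoint T f F (α n) (y n)) - T (y n)‖ ≤ α n * ((αf + κ) * M + C) :=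
    fun n => (hproj _ _ (hTmaps _ (hyQ n))).trans <| (norm_hpaPoint_sub_apply_le hTp
      (hTnonexp _ (hyQ n) _ hpQ) (hfLip _ (hyQ n) _ hpQ) (hFLip _ (hTmaps _ (hyQ n)) _ hpQ)
      hκ.le (hα n).1.le).trans (by gcongr; exacts [(hα n).1.le, (hbdd n).1])
  exact tendsto_norm_sub_apply_of_mann hTnonexp hyQ hyrec hβ hβliminf hβlimsup
    (fun n => (hbdd n).1) (fun n => (hbdd n).2) (fun n => mul_nonneg (hα n).1.le (norm_nonneg _))
    (by simpa using hα0.mul_const C) hfejer hclose (by simpa using hα0.mul_const _)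

/-- Under the condition `0 < liminf β_n ≤ limsup β_n < 1`, the unperturbed sequence of
the algorithm (HPA) satisfies `‖y_n - T y_n‖ → 0`. -/
theorem hpa_asymptotic_fixed_point_h1
    {H : Type*} [NormedAddCommGroup H] [InnerProductSpace ℝ H] [CompleteSpace H]
    (Q : Set H) (hQne : Q.Nonempty) (hQclosed : IsClosed Q) (hQconvex : Convex ℝ Q)
    (T f F : H → H)
    (hTmaps : ∀ x ∈ Q, T x ∈ Q)
    (hTnonexp : ∀ x ∈ Q, ∀ y ∈ Q, ‖T x - T y‖ ≤ ‖x - y‖)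
    (hfix : ∃ p ∈ Q, T p = p)
    (αf : ℝ) (hαf : 0 ≤ αf)
    (hfLip : ∀ x ∈ Q, ∀ y ∈ Q, ‖f x - f y‖ ≤ αf * ‖x - y‖)
    (κ η : ℝ) (hκ : 0 < κ) (hη : 0 < η)
    (hFLip : ∀ x ∈ Q, ∀ y ∈ Q, ‖F x - F y‖ ≤ κ * ‖x - y‖)
    (hFmono : ∀ x ∈ Q, ∀ y ∈ Q, η * ‖x - y‖ ^ 2 ≤ ⟪F x - F y, x - y⟫)
    (hαη : αf < η)
    (PQ : H → H)
    (hPQ : ∀ x : H, PQ x ∈ Q ∧ ∀ y ∈ Q, ⟪x - PQ x, y - PQ x⟫ ≤ 0)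
    (δ₀ : ℝ) (hδ₀ : δ₀ ∈ Set.Ioo 0 (2 * (η - αf) / κ ^ 2))
    (α β : ℕ → ℝ)
    (hα : ∀ n, α n ∈ Set.Ioc 0 δ₀)
    (hα0 : Tendsto α atTop (nhds 0))
    (hβ : ∀ n, β n ∈ Set.Icc (0 : ℝ) 1)
    (hβliminf : 0 < liminf β atTop)
    (hβlimsup : limsup β atTop < 1)
    (y : ℕ → H) (hy0 : y 0 ∈ Q)
    (hyrec : ∀ n, y (n + 1) = β n • y n
      + (1 - β n) • PQ (α n • f (y n) + (T (y n) - α n • F (T (y n))))) :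
    Tendsto (fun n => ‖y n - T (y n)‖) atTop (nhds 0) :=
  hpa_asymptotic_fixed_point_h1_general Q hQconvex T f F hTmaps hTnonexp hfix αf hαf hfLip κ η hκ
    hFLip hFmono PQ hPQ δ₀ hδ₀ α β hα hα0 hβ hβliminf hβlimsup y hy0 hyrec
end

section
/- (Theorem of Section 5, second part.) Assume the limit case α = η, i.e. f : Q → H is Lipschitz with constant η, so that g = F − f is monotone on Q. Suppose the set S = {q ∈ C : ⟨F(q) − f(q), x − q⟩ ≥ 0 for all x ∈ C} is nonempty, where C = Fix(T). For each ε > 0, let q^ε be the unique point of C satisfying ⟨F(q^ε) + ε q^ε − f(q^ε), x − q^ε⟩ ≥ 0 for all x ∈ C. Then, as ε → 0⁺, q^ε converges strongly to the unique element q̄ of S of minimal norm, i.e. q̄ ∈ S and ‖q̄‖ ≤ ‖q‖ for all q ∈ S. -/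
open scoped RealInnerProductSpace
open Filter

/-- Theorem of Section 5, second part: in the limit case `α = η`, the solutions `q^ε`
of the regularized problems (VIP_ε) converge strongly, as `ε → 0⁺`, to the unique
minimal-norm element of the solution set `S` of (VIP). -/
theorem regularized_solutions_converge_to_minimal_norm
    {H : Type*} [NormedAddCommGroup H] [InnerProductSpace ℝ H] [CompleteSpace H]
    (Q : Set H) (hQne : Q.Nonempty) (hQclosed : IsClosed Q) (hQconvex : Convex ℝ Q)
    (T f F : H → H)
    (hTmaps : ∀ x ∈ Q, T x ∈ Q)
    (hTnonexp : ∀ x ∈ Q, ∀ y ∈ Q, ‖T x - T y‖ ≤ ‖x - y‖)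
    (C : Set H) (hC : C = {x | x ∈ Q ∧ T x = x}) (hCne : C.Nonempty)
    (κ η : ℝ) (hκ : 0 < κ) (hη : 0 < η)
    (hfLip : ∀ x ∈ Q, ∀ y ∈ Q, ‖f x - f y‖ ≤ η * ‖x - y‖)
    (hFLip : ∀ x ∈ Q, ∀ y ∈ Q, ‖F x - F y‖ ≤ κ * ‖x - y‖)
    (hFmono : ∀ x ∈ Q, ∀ y ∈ Q, η * ‖x - y‖ ^ 2 ≤ ⟪F x - F y, x - y⟫)
    (S : Set H) (hS : S = {q | q ∈ C ∧ ∀ x ∈ C, 0 ≤ ⟪F q - f q, x - q⟫})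
    (hSne : S.Nonempty)
    (qe : ℝ → H)
    (hqe : ∀ ε : ℝ, 0 < ε → qe ε ∈ C ∧ ∀ p ∈ C, 0 ≤ ⟪F (qe ε) + ε • qe ε - f (qe ε), p - qe ε⟫) :
    ∃ qbar, qbar ∈ S ∧ (∀ q ∈ S, ‖qbar‖ ≤ ‖q‖)
      ∧ Tendsto qe (nhdsWithin 0 (Set.Ioi 0)) (nhds qbar) := by
  have hCsub : C ⊆ Q := by intro x hx; rw [hC] at hx; exact hx.1
  have hqeC : ∀ ε : ℝ, 0 < ε → qe ε ∈ C := fun ε hε => (hqe ε hε).1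
  -- monotonicity of g = F - f on Q
  have gmono : ∀ x ∈ Q, ∀ y ∈ Q, 0 ≤ ⟪(F x - f x) - (F y - f y), x - y⟫ := by
    intro x hx y hy
    have h1 := hFmono x hx y hy
    have h2 : ⟪f x - f y, x - y⟫ ≤ η * ‖x - y‖ ^ 2 := by
      calc ⟪f x - f y, x - y⟫ ≤ ‖f x - f y‖ * ‖x - y‖ := real_inner_le_norm _ _
        _ ≤ (η * ‖x - y‖) * ‖x - y‖ := by
            have := hfLip x hx y hy
            nlinarith [norm_nonneg (x - y)]
        _ = η * ‖x - y‖ ^ 2 := by ring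
    have e : (F x - f x) - (F y - f y) = (F x - F y) - (f x - f y) := by abel
    rw [e, inner_sub_left]
    linarith
  -- key cross inequality between regularized solutions
  have key : ∀ ε : ℝ, 0 < ε → ∀ δ : ℝ, 0 < δ →
      ε * ‖qe ε‖ ^ 2 + δ * ‖qe δ‖ ^ 2 ≤ (ε + δ) * ⟪qe ε, qe δ⟫ := by
    intro ε hε δ hδ
    have A := (hqe ε hε).2 (qe δ) (hqeC δ hδ)
    have B := (hqe δ hδ).2 (qe ε) (hqeC ε hε)
    have M := gmono (qe ε) (hCsub (hqeC ε hε)) (qe δ) (hCsub (hqeC δ hδ))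
    simp only [inner_add_left, inner_sub_left, inner_sub_right, real_inner_smul_left,
      real_inner_self_eq_norm_sq] at A B M
    nlinarith [real_inner_comm (qe ε) (qe δ)]
  -- bound by the norm of any element of S
  have minbound : ∀ q ∈ S, ∀ ε : ℝ, 0 < ε → ‖qe ε‖ ≤ ‖q‖ := by
    intro q hq ε hε
    rw [hS] at hq
    obtain ⟨hqC, hqVI⟩ := hq
    have A := (hqe ε hε).2 q hqC
    have B := hqVI (qe ε) (hqeC ε hε)
    have M := gmono (qe ε) (hCsub (hqeC ε hε)) q (hCsub hqC)
    simp only [inner_add_left, inner_sub_left, inner_sub_right, real_inner_smul_left,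
      real_inner_self_eq_norm_sq] at A B M
    have hlin : 0 ≤ ε * ⟪qe ε, q⟫ - ε * ‖qe ε‖ ^ 2 := by linarith
    have h1 : ‖qe ε‖ ^ 2 ≤ ⟪qe ε, q⟫ := by nlinarith
    have h2 := real_inner_le_norm (qe ε) q
    nlinarith [norm_nonneg (qe ε), norm_nonneg q]
  -- the fundamental Cauchy-type estimate
  have cauchyEst : ∀ ε δ : ℝ, 0 < δ → δ ≤ ε →
      ‖qe ε - qe δ‖ ^ 2 ≤ ‖qe δ‖ ^ 2 - ‖qe ε‖ ^ 2 := by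
    intro ε δ hδ hδε
    have hε : 0 < ε := lt_of_lt_of_le hδ hδε
    have hk := key ε hε δ hδ
    have hib := real_inner_le_norm (qe ε) (qe δ)
    have ha := norm_nonneg (qe ε)
    have hb := norm_nonneg (qe δ)
    have hab : ‖qe ε‖ ≤ ‖qe δ‖ := by
      by_contra hcon
      push_neg at hcon
      nlinarith [mul_le_mul_of_nonneg_left hib (by positivity : (0:ℝ) ≤ ε + δ),
        mul_pos hε (mul_pos (sub_pos.2 hcon) (sub_pos.2 hcon)),
        mul_nonneg (mul_nonneg (sub_nonneg.2 hδε) hb) (sub_pos.2 hcon).le]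
    have hin : ‖qe ε‖ ^ 2 ≤ ⟪qe ε, qe δ⟫ := by
      nlinarith [mul_nonneg (mul_nonneg hδ.le (sub_nonneg.2 hab)) (add_nonneg ha hb)]
    have hexp : ‖qe ε - qe δ‖ ^ 2 = ‖qe ε‖ ^ 2 - 2 * ⟪qe ε, qe δ⟫ + ‖qe δ‖ ^ 2 :=
      norm_sub_sq_real _ _
    linarith
  -- the approximating sequence
  obtain ⟨q₀, hq₀S⟩ := hSne
  set u : ℕ → H := fun n => qe (1 / (n + 1)) with hu
  have hpos : ∀ n : ℕ, (0:ℝ) < 1 / (n + 1) := fun n => by positivity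
  have hantidiv : ∀ {n m : ℕ}, n ≤ m → (1 : ℝ) / (m + 1) ≤ 1 / (n + 1) := by
    intro n m hnm
    apply one_div_le_one_div_of_le (by positivity)
    have : (n : ℝ) ≤ m := Nat.cast_le.2 hnm
    linarith
  have hsmono : ∀ n m : ℕ, n ≤ m → ‖u n - u m‖ ^ 2 ≤ ‖u m‖ ^ 2 - ‖u n‖ ^ 2 := by
    intro n m hnm
    exact cauchyEst _ _ (hpos m) (hantidiv hnm)
  have smonot : Monotone (fun n => ‖u n‖ ^ 2) := by
    intro n m hnm
    have := hsmono n m hnm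
    have h0 := sq_nonneg (‖u n - u m‖)
    simp only
    nlinarith [sq_nonneg ‖u n - u m‖]
  have sbdd : BddAbove (Set.range fun n => ‖u n‖ ^ 2) := by
    refine ⟨‖q₀‖ ^ 2, ?_⟩
    rintro x ⟨n, rfl⟩
    have := minbound q₀ hq₀S _ (hpos n)
    simp only
    nlinarith [norm_nonneg (u n)]
  set L : ℝ := ⨆ n, ‖u n‖ ^ 2 with hL
  have hLtend : Tendsto (fun n => ‖u n‖ ^ 2) atTop (nhds L) :=
    tendsto_atTop_ciSup smonot sbdd
  have hsleL : ∀ n, ‖u n‖ ^ 2 ≤ L := fun n => le_ciSup sbdd n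
  -- all regularized solutions have squared norm at most L
  have hL_all : ∀ ε : ℝ, 0 < ε → ‖qe ε‖ ^ 2 ≤ L := by
    intro ε hε
    obtain ⟨n, hn⟩ := exists_nat_one_div_lt hε
    have h := cauchyEst ε (1 / (n + 1)) (hpos n) hn.le
    have := hsleL n
    nlinarith [sq_nonneg ‖qe ε - qe (1 / (n + 1 : ℝ))‖]
  -- u is Cauchy
  have hcauchy : CauchySeq u := by
    rw [Metric.cauchySeq_iff']
    intro c hc
    have hev : ∀ᶠ n in atTop, L - c ^ 2 < ‖u n‖ ^ 2 :=
      hLtend.eventually (eventually_gt_nhds (by nlinarith : L - c ^ 2 < L))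
    obtain ⟨N, hN⟩ := hev.exists
    refine ⟨N, fun n hn => ?_⟩
    have h := hsmono N n hn
    have h2 : ‖u n - u N‖ ^ 2 < c ^ 2 := by
      rw [norm_sub_rev]
      nlinarith [hsleL n]
    have := lt_of_pow_lt_pow_left₀ 2 hc.le h2
    simpa [dist_eq_norm] using this
  obtain ⟨qbar, hqbar⟩ := cauchySeq_tendsto_of_complete hcauchy
  -- qbar ∈ Q
  have huQ : ∀ n, u n ∈ Q := fun n => hCsub (hqeC _ (hpos n))
  have hqbarQ : qbar ∈ Q := hQclosed.mem_of_tendsto hqbar (Eventually.of_forall huQ)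
  have hdist0 : Tendsto (fun n => ‖qbar - u n‖) atTop (nhds 0) := by
    have h : Tendsto (fun n => qbar - u n) atTop (nhds (qbar - qbar)) :=
      Tendsto.sub tendsto_const_nhds hqbar
    rw [sub_self] at h
    simpa using h.norm
  have hdist0' : Tendsto (fun n => ‖u n - qbar‖) atTop (nhds 0) := by
    simpa [norm_sub_rev] using hdist0
  -- qbar is a fixed point
  have hTq : T qbar = qbar := by
    have hb : ∀ n, ‖T qbar - qbar‖ ≤ 2 * ‖qbar - u n‖ := by
      intro n
      have hTu : T (u n) = u n := by
        have h := hqeC _ (hpos n); rw [hC] at h; exact h.2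
      calc ‖T qbar - qbar‖ ≤ ‖T qbar - T (u n)‖ + ‖T (u n) - qbar‖ :=
            norm_sub_le_norm_sub_add_norm_sub _ _ _
        _ ≤ ‖qbar - u n‖ + ‖u n - qbar‖ := by
            have h2 := hTnonexp qbar hqbarQ (u n) (huQ n)
            rw [hTu] at h2
            simp only [hTu]
            linarith
        _ = 2 * ‖qbar - u n‖ := by rw [norm_sub_rev (u n)]; ring
    have hle : ‖T qbar - qbar‖ ≤ 0 := by
      have h2 : Tendsto (fun n => 2 * ‖qbar - u n‖) atTop (nhds 0) := by
        simpa using hdist0.const_mul 2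
      exact ge_of_tendsto h2 (Eventually.of_forall hb)
    have : ‖T qbar - qbar‖ = 0 := le_antisymm hle (norm_nonneg _)
    rw [norm_eq_zero, sub_eq_zero] at this
    exact this
  have hqbarC : qbar ∈ C := by rw [hC]; exact ⟨hqbarQ, hTq⟩
  -- qbar solves the variational inequality
  have hFconv : Tendsto (fun n => F (u n)) atTop (nhds (F qbar)) := by
    rw [tendsto_iff_norm_sub_tendsto_zero]
    apply squeeze_zero (fun n => norm_nonneg _) (fun n => hFLip (u n) (huQ n) qbar hqbarQ)
    simpa using hdist0'.const_mul κ
  have hfconv : Tendsto (fun n => f (u n)) atTop (nhds (f qbar)) := by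
    rw [tendsto_iff_norm_sub_tendsto_zero]
    apply squeeze_zero (fun n => norm_nonneg _) (fun n => hfLip (u n) (huQ n) qbar hqbarQ)
    simpa using hdist0'.const_mul η
  have hsmul0 : Tendsto (fun n : ℕ => (1 / (n + 1 : ℝ)) • u n) atTop (nhds 0) := by
    have hg : Tendsto (fun n : ℕ => (1 / (n + 1 : ℝ)) * ‖q₀‖) atTop (nhds 0) := by
      simpa using tendsto_one_div_add_atTop_nhds_zero_nat.mul_const ‖q₀‖
    apply squeeze_zero_norm _ hg
    intro n
    rw [norm_smul, Real.norm_eq_abs, abs_of_pos (hpos n)]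
    exact mul_le_mul_of_nonneg_left (minbound q₀ hq₀S _ (hpos n)) (hpos n).le
  have hVI : ∀ x ∈ C, 0 ≤ ⟪F qbar - f qbar, x - qbar⟫ := by
    intro x hx
    have hleft : Tendsto (fun n : ℕ => F (u n) + (1 / (n + 1 : ℝ)) • u n - f (u n)) atTop
        (nhds (F qbar - f qbar)) := by
      have := (hFconv.add hsmul0).sub hfconv
      simpa using this
    have hright : Tendsto (fun n : ℕ => x - u n) atTop (nhds (x - qbar)) :=
      tendsto_const_nhds.sub hqbar
    have hcont : Tendsto (fun n : ℕ =>
        ⟪F (u n) + (1 / (n + 1 : ℝ)) • u n - f (u n), x - u n⟫) atTop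
        (nhds ⟪F qbar - f qbar, x - qbar⟫) := hleft.inner hright
    exact le_of_tendsto_of_tendsto' tendsto_const_nhds hcont
      (fun n => (hqe _ (hpos n)).2 x hx)
  have hqbarS : qbar ∈ S := by rw [hS]; exact ⟨hqbarC, hVI⟩
  refine ⟨qbar, hqbarS, ?_, ?_⟩
  · intro q hq
    exact le_of_tendsto' hqbar.norm (fun n => minbound q hq _ (hpos n))
  · -- the convergence
    rw [Metric.tendsto_nhdsWithin_nhds]
    intro c hc
    have h1 : ∀ᶠ n in atTop, L - (c / 2) ^ 2 < ‖u n‖ ^ 2 :=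
      hLtend.eventually (eventually_gt_nhds (by nlinarith : L - (c / 2) ^ 2 < L))
    have h2 : ∀ᶠ n in atTop, dist (u n) qbar < c / 2 := by
      have := hqbar (Metric.ball_mem_nhds qbar (by positivity : (0:ℝ) < c / 2))
      simpa [Metric.mem_ball] using this
    obtain ⟨N, hN1, hN2⟩ := (h1.and h2).exists
    refine ⟨1 / (N + 1), hpos N, ?_⟩
    intro ε hεIoi hdist
    have hε : (0:ℝ) < ε := hεIoi
    have hεle : ε ≤ 1 / (N + 1) := by
      rw [Real.dist_eq, sub_zero, abs_of_pos hε] at hdist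
      exact hdist.le
    have hest := cauchyEst (1 / (N + 1)) ε hε hεle
    have hεL := hL_all ε hε
    have hsq : ‖u N - qe ε‖ ^ 2 < (c / 2) ^ 2 := by
      have : ‖u N - qe ε‖ ^ 2 ≤ ‖qe ε‖ ^ 2 - ‖u N‖ ^ 2 := hest
      nlinarith
    have h3 : ‖u N - qe ε‖ < c / 2 := lt_of_pow_lt_pow_left₀ 2 (by positivity) hsq
    calc dist (qe ε) qbar ≤ dist (qe ε) (u N) + dist (u N) qbar := dist_triangle _ _ _
      _ < c / 2 + c / 2 := by
          apply add_lt_add_of_lt_of_lt _ hN2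
          rw [dist_eq_norm, norm_sub_rev]
          exact h3
      _ = c := by ring
end
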